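/- arXiv:2603.23643 — 9 statements merged into one kernel-verified Lean document; each statement's English description precedes it below -/
import Mathlib

section
/- Let X be a metric space and G a group acting on X by isometries with at least two distinct orbits, such that for all x, y ∈ X the infimum d_{X/G}(x,y) := inf_{g∈G} d(g·x, y) is attained. Let F be a set of G-invariant Lipschitz functions X → ℝ, and let h : X → ℝ^n be a nonconstant function each of whose coordinate functions h_i lies in the Lipschitz closure of F (i.e., for every δ > 0 there exists f ∈ F with β(h_i − f) < δ), and suppose α(h↓) > 0 and β(h↓) < ∞. Then for every ε > 0 there exists f : X → ℝ^n, with every coordinate function of f belonging to F, such that dist(f↓) < dist(h↓) + ε. -/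
noncomputable section

/-- The quotient distance `d_{X/G}(x,y) = inf_{g∈G} d(g•x, y)`. -/
def quotDist (G : Type*) {X : Type*} [MetricSpace X] [Group G] [MulAction G X]
    (x y : X) : ℝ :=
  ⨅ g : G, dist (g • x) y

/-- The set of quotient difference quotients `‖f x − f y‖ / d_{X/G}(x,y)` over pairs with
`d_{X/G}(x,y) ≠ 0`. -/
def quotRatioSet (G : Type*) {X : Type*} [MetricSpace X] [Group G] [MulAction G X]
    {n : ℕ} (f : X → EuclideanSpace ℝ (Fin n)) : Set ℝ :=
  {r | ∃ x y : X, quotDist G x y ≠ 0 ∧ r = ‖f x - f y‖ / quotDist G x y}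

/-- **Lipschitz closures suffice.**  Let `G` act on `X` by isometries with at least two
distinct orbits, with the quotient distance always attained.  Let `F` be a set of
`G`-invariant Lipschitz functions `X → ℝ` and `h : X → ℝⁿ` a nonconstant map whose
coordinate functions lie in the Lipschitz closure of `F`, with `α(h↓) > 0` and
`β(h↓) < ∞`.  Then for every `ε > 0` there is `f : X → ℝⁿ` with coordinates in `F` and
`dist(f↓) < dist(h↓) + ε`. -/
theorem stmt_5 {X : Type*} [MetricSpace X] {G : Type*} [Group G] [MulAction G X] {n : ℕ}
    (hiso : ∀ g : G, Isometry (fun x : X => g • x))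
    (horb : ∃ x y : X, ∀ g : G, g • x ≠ y)
    (hatt : ∀ x y : X, ∃ g : G, dist (g • x) y = quotDist G x y)
    (F : Set (X → ℝ))
    (hF : ∀ f ∈ F, (∀ (g : G) (x : X), f (g • x) = f x) ∧ ∃ K, LipschitzWith K f)
    (h : X → EuclideanSpace ℝ (Fin n))
    (hnc : ∃ x y : X, h x ≠ h y)
    (hclos : ∀ (i : Fin n) (δ : ℝ), 0 < δ → ∃ f ∈ F,
      ∀ x y : X, |(h x i - f x) - (h y i - f y)| ≤ δ * dist x y)
    (hα : 0 < sInf (quotRatioSet G h)) (hβ : BddAbove (quotRatioSet G h))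
    (ε : ℝ) (hε : 0 < ε) :
    ∃ f : X → EuclideanSpace ℝ (Fin n),
      (∀ i : Fin n, (fun x => f x i) ∈ F) ∧
      0 < sInf (quotRatioSet G f) ∧ BddAbove (quotRatioSet G f) ∧
      sSup (quotRatioSet G f) / sInf (quotRatioSet G f) <
        sSup (quotRatioSet G h) / sInf (quotRatioSet G h) + ε := by
  classical
  have qnn : ∀ x y : X, 0 ≤ quotDist G x y := by
    intro x y
    obtain ⟨g, hg⟩ := hatt x y
    rw [← hg]; exact dist_nonneg
  obtain ⟨x0, y0, hx0⟩ := horb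
  have hq0 : quotDist G x0 y0 ≠ 0 := by
    obtain ⟨g, hg⟩ := hatt x0 y0
    rw [← hg]
    exact fun hc => hx0 g (by rwa [dist_eq_zero] at hc)
  set A := sInf (quotRatioSet G h) with hAdef
  set B := sSup (quotRatioSet G h) with hBdef
  have hApos : 0 < A := hα
  have hbb : BddBelow (quotRatioSet G h) := by
    refine ⟨0, ?_⟩
    rintro r ⟨x, y, hq, rfl⟩
    exact div_nonneg (norm_nonneg _) (qnn x y)
  have hne : (quotRatioSet G h).Nonempty := ⟨_, x0, y0, hq0, rfl⟩
  have hB0 : 0 ≤ B := by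
    obtain ⟨r, hr⟩ := hne
    have h1 : 0 ≤ r := by
      obtain ⟨x, y, hq, rfl⟩ := hr
      exact div_nonneg (norm_nonneg _) (qnn x y)
    exact le_trans h1 (le_csSup hβ hr)
  -- h is G-invariant
  have hinv : ∀ (g : G) (x : X), h (g • x) = h x := by
    intro g x
    ext i
    have key : ∀ δ : ℝ, 0 < δ → |h (g • x) i - h x i| ≤ δ * dist (g • x) x := by
      intro δ hδ
      obtain ⟨f, hfF, hf⟩ := hclos i δ hδ
      have h2 := hf (g • x) x
      have hfi := (hF f hfF).1 g x
      have heq : (h (g • x) i - f (g • x)) - (h x i - f x) = h (g • x) i - h x i := by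
        rw [hfi]; ring
      rwa [heq] at h2
    have hC : (0:ℝ) ≤ dist (g • x) x := dist_nonneg
    have h0 : |h (g • x) i - h x i| ≤ 0 := by
      refine le_of_forall_pos_le_add ?_
      intro e he
      have hk := key (e / (dist (g • x) x + 1)) (by positivity)
      calc |h (g • x) i - h x i| ≤ (e / (dist (g • x) x + 1)) * dist (g • x) x := hk
        _ ≤ e := by
            rw [div_mul_eq_mul_div, div_le_iff₀ (by positivity)]
            nlinarith
        _ = 0 + e := (zero_add e).symm
    have := abs_nonpos_iff.mp h0
    linarith [sub_eq_zero.mp this, le_of_eq (sub_eq_zero.mp this)]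
  -- norm bound in Euclidean space
  have normbound : ∀ (v : EuclideanSpace ℝ (Fin n)) (M : ℝ), 0 ≤ M →
      (∀ i, |v i| ≤ M) → ‖v‖ ≤ Real.sqrt n * M := by
    intro v M hM hv
    rw [EuclideanSpace.norm_eq]
    have hsum : ∑ i, ‖v i‖ ^ 2 ≤ (n : ℝ) * M ^ 2 := by
      calc ∑ i, ‖v i‖ ^ 2 ≤ ∑ _i : Fin n, M ^ 2 := by
            apply Finset.sum_le_sum
            intro i _
            have := hv i
            rw [Real.norm_eq_abs]
            nlinarith [abs_nonneg (v i)]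
        _ = (n : ℝ) * M ^ 2 := by simp [Finset.sum_const]
    calc Real.sqrt (∑ i, ‖v i‖ ^ 2) ≤ Real.sqrt ((n : ℝ) * M ^ 2) := Real.sqrt_le_sqrt hsum
      _ = Real.sqrt n * M := by
          rw [Real.sqrt_mul (by positivity), Real.sqrt_sq hM]
  -- choose parameters
  set ε' := min ε 1 with hε'def
  have hε'pos : 0 < ε' := lt_min hε one_pos
  have hε'le1 : ε' ≤ 1 := min_le_right _ _
  have hε'leε : ε' ≤ ε := min_le_left _ _
  set c := min (A / 2) (ε' * A ^ 2 / (2 * (A + B + 1))) with hcdef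
  have hcpos : 0 < c := by
    apply lt_min (by linarith)
    positivity
  have hcA : c ≤ A / 2 := min_le_left _ _
  have hc2 : c ≤ ε' * A ^ 2 / (2 * (A + B + 1)) := min_le_right _ _
  have hc2' : c * (2 * (A + B + 1)) ≤ ε' * A ^ 2 :=
    (le_div_iff₀ (by positivity)).mp hc2
  have hsq : (0:ℝ) ≤ Real.sqrt n := Real.sqrt_nonneg _
  set δ := c / (Real.sqrt n + 1) with hδdef
  have hδpos : 0 < δ := by positivity
  have hδc : Real.sqrt n * δ ≤ c := by
    rw [hδdef, mul_comm, div_mul_eq_mul_div, div_le_iff₀ (by positivity)]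
    nlinarith
  -- choose the approximating coordinate functions
  choose fi hfiF hfi using fun i : Fin n => hclos i δ hδpos
  set f : X → EuclideanSpace ℝ (Fin n) := fun x => WithLp.toLp 2 (fun i => fi i x) with hfdef
  have hfinv : ∀ (g : G) (x : X), f (g • x) = f x := by
    intro g x
    ext i
    exact (hF _ (hfiF i)).1 g x
  have hdiff : ∀ x y : X, ‖(h x - f x) - (h y - f y)‖ ≤ Real.sqrt n * (δ * dist x y) := by
    intro x y
    apply normbound _ _ (by positivity)
    intro i
    exact hfi i x y
  have hratio : ∀ x y : X, quotDist G x y ≠ 0 →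
      |‖f x - f y‖ - ‖h x - h y‖| ≤ c * quotDist G x y := by
    intro x y hq
    obtain ⟨g, hg⟩ := hatt x y
    have hqpos : 0 < quotDist G x y := lt_of_le_of_ne (qnn x y) (Ne.symm hq)
    have h1 := hdiff (g • x) y
    rw [hg, hfinv g x, hinv g x] at h1
    have heq : (f x - f y) - (h x - h y) = -((h x - f x) - (h y - f y)) := by abel
    calc |‖f x - f y‖ - ‖h x - h y‖| ≤ ‖(f x - f y) - (h x - h y)‖ :=
          abs_norm_sub_norm_le _ _
      _ = ‖(h x - f x) - (h y - f y)‖ := by rw [heq, norm_neg]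
      _ ≤ Real.sqrt n * (δ * quotDist G x y) := h1
      _ ≤ c * quotDist G x y := by
          rw [← mul_assoc]
          exact mul_le_mul_of_nonneg_right hδc hqpos.le
  have hfelem : ∀ r ∈ quotRatioSet G f, A - c ≤ r ∧ r ≤ B + c := by
    rintro r ⟨x, y, hq, rfl⟩
    have hqpos : 0 < quotDist G x y := lt_of_le_of_ne (qnn x y) (Ne.symm hq)
    have hmem : ‖h x - h y‖ / quotDist G x y ∈ quotRatioSet G h := ⟨x, y, hq, rfl⟩
    have hA_le := csInf_le hbb hmem
    have h_le_B := le_csSup hβ hmem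
    have hAq : A * quotDist G x y ≤ ‖h x - h y‖ := (le_div_iff₀ hqpos).mp hA_le
    have hBq : ‖h x - h y‖ ≤ B * quotDist G x y := (div_le_iff₀ hqpos).mp h_le_B
    have hr := abs_le.mp (hratio x y hq)
    constructor
    · rw [le_div_iff₀ hqpos]; nlinarith [hr.1]
    · rw [div_le_iff₀ hqpos]; nlinarith [hr.2]
  have hfne : (quotRatioSet G f).Nonempty := ⟨_, x0, y0, hq0, rfl⟩
  have hfbdd : BddAbove (quotRatioSet G f) := ⟨B + c, fun r hr => (hfelem r hr).2⟩
  have hsInf_ge : A - c ≤ sInf (quotRatioSet G f) :=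
    le_csInf hfne fun r hr => (hfelem r hr).1
  have hsSup_le : sSup (quotRatioSet G f) ≤ B + c :=
    csSup_le hfne fun r hr => (hfelem r hr).2
  have hAc : 0 < A - c := by linarith
  have hmid : (B + c) / (A - c) < B / A + ε' := by
    have hrw : B / A + ε' = (B + ε' * A) / A := by field_simp
    rw [hrw, div_lt_div_iff₀ hAc hApos]
    nlinarith [mul_pos hcpos hApos, mul_nonneg hcpos.le hB0,
      mul_nonneg (mul_nonneg hApos.le hcpos.le) (sub_nonneg.mpr hε'le1)]
  refine ⟨f, fun i => hfiF i, lt_of_lt_of_le hAc hsInf_ge, hfbdd, ?_⟩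
  calc sSup (quotRatioSet G f) / sInf (quotRatioSet G f)
      ≤ (B + c) / (A - c) :=
        div_le_div₀ (by linarith) hsSup_le hAc hsInf_ge
    _ < B / A + ε' := hmid
    _ ≤ B / A + ε := by linarith
end
end

section
/- Let G be a finite subgroup of O(d), let ω be the surface measure on the unit sphere S^{d−1} ⊆ ℝ^d, let q ∈ L¹(S^{d−1}, ω), and define p : ℝ^d → ℝ by p(x) = ∫_{S^{d−1}} q(y) · max_{g∈G} ⟨x, g y⟩ dω(y). Let x ∈ ℝ^d have trivial stabilizer in G (g·x = x implies g = identity), and let u : S^{d−1} → ℝ^d be a measurable function such that for ω-almost every y, u(y) belongs to the orbit G·y and ⟨x, u(y)⟩ = max_{g∈G} ⟨x, g y⟩. Then p is differentiable at x with gradient ∇p(x) = ∫_{S^{d−1}} q(y) u(y) dω(y). -/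
noncomputable section

open MeasureTheory Metric
open scoped RealInnerProductSpace
open scoped Pointwise

/-- The surface measure on the unit sphere `S^{d−1} ⊆ ℝ^d`. -/
def sphereMeasure (d : ℕ) : Measure (sphere (0 : EuclideanSpace ℝ (Fin d)) 1) :=
  (volume : Measure (EuclideanSpace ℝ (Fin d))).toSphere

/-- The max filter of `x` against template `y` for a finite subgroup `G` of the orthogonal
group of `ℝ^d`: `max_{g∈G} ⟨x, g y⟩`. -/
def maxFilter {d : ℕ}
    (G : Subgroup (EuclideanSpace ℝ (Fin d) ≃ₗᵢ[ℝ] EuclideanSpace ℝ (Fin d)))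
    (y x : EuclideanSpace ℝ (Fin d)) : ℝ :=
  ⨆ g : G, ⟪x, (g : EuclideanSpace ℝ (Fin d) ≃ₗᵢ[ℝ] EuclideanSpace ℝ (Fin d)) y⟫

namespace MaxFilterAux

variable {d : ℕ}

local notation "E" => EuclideanSpace ℝ (Fin d)

lemma sphere_hyperplane_null (v : EuclideanSpace ℝ (Fin d)) (hv : v ≠ 0) :
    sphereMeasure d {y : sphere (0:E) 1 | ⟪v, (y : E)⟫ = 0} = 0 := by
  have hs : MeasurableSet {y : sphere (0:E) 1 | ⟪v, (y : E)⟫ = 0} :=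
    (isClosed_eq (continuous_const.inner continuous_subtype_val) continuous_const).measurableSet
  rw [sphereMeasure, Measure.toSphere_apply' _ hs]
  have h0 : (volume : Measure E)
      (Set.Ioo (0:ℝ) 1 • (Subtype.val '' {y : sphere (0:E) 1 | ⟪v, (y : E)⟫ = 0})) = 0 := by
    refine measure_mono_null ?_
      (Measure.addHaar_submodule volume (LinearMap.ker ((innerSL ℝ v : E →ₗ[ℝ] ℝ))) ?_)
    · rintro z ⟨c, hc, w, ⟨y, hy, rfl⟩, rfl⟩
      simp only [SetLike.mem_coe, LinearMap.mem_ker, ContinuousLinearMap.coe_coe, innerSL_apply_apply,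
        inner_smul_right]
      rw [hy]; ring
    · intro h
      have : v ∈ LinearMap.ker ((innerSL ℝ v : E →ₗ[ℝ] ℝ)) := h ▸ Submodule.mem_top
      simp only [LinearMap.mem_ker, ContinuousLinearMap.coe_coe, innerSL_apply_apply,
        real_inner_self_eq_norm_sq] at this
      exact hv (by simpa using this)
  rw [h0, mul_zero]

variable {G : Subgroup (EuclideanSpace ℝ (Fin d) ≃ₗᵢ[ℝ] EuclideanSpace ℝ (Fin d))} [Finite G]

lemma bddAbove_range (y x : EuclideanSpace ℝ (Fin d)) :
    BddAbove (Set.range fun g : G =>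
      ⟪x, (g : EuclideanSpace ℝ (Fin d) ≃ₗᵢ[ℝ] EuclideanSpace ℝ (Fin d)) y⟫) :=
  (Set.finite_range _).bddAbove

lemma maxFilter_sub_le (y x x' : EuclideanSpace ℝ (Fin d)) :
    maxFilter G y x - maxFilter G y x' ≤ ‖y‖ * ‖x - x'‖ := by
  have : Nonempty G := ⟨1⟩
  rw [sub_le_iff_le_add, maxFilter]
  refine ciSup_le fun g => ?_
  have h1 : ⟪x, (g : EuclideanSpace ℝ (Fin d) ≃ₗᵢ[ℝ] EuclideanSpace ℝ (Fin d)) y⟫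
      = ⟪x', (g : EuclideanSpace ℝ (Fin d) ≃ₗᵢ[ℝ] EuclideanSpace ℝ (Fin d)) y⟫
        + ⟪x - x', (g : EuclideanSpace ℝ (Fin d) ≃ₗᵢ[ℝ] EuclideanSpace ℝ (Fin d)) y⟫ := by
    rw [← inner_add_left]; congr 1; abel
  rw [h1]
  have h2 : ⟪x', (g : EuclideanSpace ℝ (Fin d) ≃ₗᵢ[ℝ] EuclideanSpace ℝ (Fin d)) y⟫
      ≤ maxFilter G y x' := le_ciSup (bddAbove_range y x') g
  have h3 : ⟪x - x', (g : EuclideanSpace ℝ (Fin d) ≃ₗᵢ[ℝ] EuclideanSpace ℝ (Fin d)) y⟫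
      ≤ ‖x - x'‖ * ‖y‖ := by
    calc _ ≤ ‖x - x'‖ * ‖(g : EuclideanSpace ℝ (Fin d) ≃ₗᵢ[ℝ] EuclideanSpace ℝ (Fin d)) y‖ :=
          real_inner_le_norm _ _
    _ = ‖x - x'‖ * ‖y‖ := by rw [LinearIsometryEquiv.norm_map]
  linarith

lemma abs_maxFilter_sub_le (y x x' : EuclideanSpace ℝ (Fin d)) :
    |maxFilter G y x - maxFilter G y x'| ≤ ‖y‖ * ‖x - x'‖ := by
  rw [abs_sub_le_iff]
  refine ⟨maxFilter_sub_le y x x', ?_⟩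
  calc maxFilter G y x' - maxFilter G y x ≤ ‖y‖ * ‖x' - x‖ := maxFilter_sub_le y x' x
  _ = ‖y‖ * ‖x - x'‖ := by rw [norm_sub_rev]

lemma maxFilter_sub_le' (y y' x : EuclideanSpace ℝ (Fin d)) :
    maxFilter G y x - maxFilter G y' x ≤ ‖x‖ * ‖y - y'‖ := by
  have : Nonempty G := ⟨1⟩
  rw [sub_le_iff_le_add, maxFilter]
  refine ciSup_le fun g => ?_
  have h1 : ⟪x, (g : EuclideanSpace ℝ (Fin d) ≃ₗᵢ[ℝ] EuclideanSpace ℝ (Fin d)) y⟫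
      = ⟪x, (g : EuclideanSpace ℝ (Fin d) ≃ₗᵢ[ℝ] EuclideanSpace ℝ (Fin d)) y'⟫
        + ⟪x, (g : EuclideanSpace ℝ (Fin d) ≃ₗᵢ[ℝ] EuclideanSpace ℝ (Fin d)) (y - y')⟫ := by
    rw [← inner_add_right]; congr 2
    rw [map_sub]; abel
  rw [h1]
  have h2 : ⟪x, (g : EuclideanSpace ℝ (Fin d) ≃ₗᵢ[ℝ] EuclideanSpace ℝ (Fin d)) y'⟫
      ≤ maxFilter G y' x := le_ciSup (bddAbove_range y' x) g
  have h3 : ⟪x, (g : EuclideanSpace ℝ (Fin d) ≃ₗᵢ[ℝ] EuclideanSpace ℝ (Fin d)) (y - y')⟫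
      ≤ ‖x‖ * ‖y - y'‖ := by
    calc _ ≤ ‖x‖ * ‖(g : EuclideanSpace ℝ (Fin d) ≃ₗᵢ[ℝ] EuclideanSpace ℝ (Fin d)) (y - y')‖ :=
          real_inner_le_norm _ _
    _ = ‖x‖ * ‖y - y'‖ := by rw [LinearIsometryEquiv.norm_map]
  linarith

lemma continuous_maxFilter (x : EuclideanSpace ℝ (Fin d)) :
    Continuous fun y : EuclideanSpace ℝ (Fin d) => maxFilter G y x := by
  refine (lipschitzWith_iff_dist_le_mul.2 fun y y' => ?_).continuous (K := ‖x‖₊)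
  rw [Real.dist_eq, dist_eq_norm]
  rw [abs_sub_le_iff]
  constructor
  · exact maxFilter_sub_le' y y' x
  · calc maxFilter G y' x - maxFilter G y x ≤ ‖x‖ * ‖y' - y‖ := maxFilter_sub_le' y' y x
    _ = ‖x‖ * ‖y - y'‖ := by rw [norm_sub_rev]

lemma abs_maxFilter_le (y x : EuclideanSpace ℝ (Fin d)) :
    |maxFilter G y x| ≤ ‖x‖ * ‖y‖ := by
  have : Nonempty G := ⟨1⟩
  rw [abs_le]
  constructor
  · calc -(‖x‖ * ‖y‖)
        ≤ ⟪x, ((1 : G) : EuclideanSpace ℝ (Fin d) ≃ₗᵢ[ℝ] EuclideanSpace ℝ (Fin d)) y⟫ := by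
          rw [neg_le]
          calc -⟪x, ((1:G) : EuclideanSpace ℝ (Fin d) ≃ₗᵢ[ℝ] EuclideanSpace ℝ (Fin d)) y⟫
              = ⟪x, -(((1:G) : EuclideanSpace ℝ (Fin d) ≃ₗᵢ[ℝ] EuclideanSpace ℝ (Fin d)) y)⟫ := by
                rw [inner_neg_right]
          _ ≤ ‖x‖ * ‖-(((1:G) : EuclideanSpace ℝ (Fin d) ≃ₗᵢ[ℝ] EuclideanSpace ℝ (Fin d)) y)‖ :=
              real_inner_le_norm _ _
          _ = ‖x‖ * ‖y‖ := by rw [norm_neg, LinearIsometryEquiv.norm_map]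
    _ ≤ maxFilter G y x := le_ciSup (bddAbove_range y x) 1
  · refine ciSup_le fun g => ?_
    calc _ ≤ ‖x‖ * ‖(g : EuclideanSpace ℝ (Fin d) ≃ₗᵢ[ℝ] EuclideanSpace ℝ (Fin d)) y‖ :=
        real_inner_le_norm _ _
    _ = ‖x‖ * ‖y‖ := by rw [LinearIsometryEquiv.norm_map]

lemma hasFDerivAt_maxFilter (x y uy : EuclideanSpace ℝ (Fin d)) (g₀ : G)
    (hg₀ : (g₀ : EuclideanSpace ℝ (Fin d) ≃ₗᵢ[ℝ] EuclideanSpace ℝ (Fin d)) y = uy)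
    (hmax : ∀ g : G, (g : EuclideanSpace ℝ (Fin d) ≃ₗᵢ[ℝ] EuclideanSpace ℝ (Fin d)) y ≠ uy →
      ⟪x, (g : EuclideanSpace ℝ (Fin d) ≃ₗᵢ[ℝ] EuclideanSpace ℝ (Fin d)) y⟫ < ⟪x, uy⟫) :
    HasFDerivAt (fun x' => maxFilter G y x') (innerSL ℝ uy) x := by
  have : Nonempty G := ⟨1⟩
  set U : Set (EuclideanSpace ℝ (Fin d)) :=
    {x' | ∀ g : G, (g : EuclideanSpace ℝ (Fin d) ≃ₗᵢ[ℝ] EuclideanSpace ℝ (Fin d)) y ≠ uy →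
      ⟪x', (g : EuclideanSpace ℝ (Fin d) ≃ₗᵢ[ℝ] EuclideanSpace ℝ (Fin d)) y⟫ < ⟪x', uy⟫} with hU
  have hUopen : IsOpen U := by
    have : U = ⋂ g : G,
        {x' | (g : EuclideanSpace ℝ (Fin d) ≃ₗᵢ[ℝ] EuclideanSpace ℝ (Fin d)) y ≠ uy →
          ⟪x', (g : EuclideanSpace ℝ (Fin d) ≃ₗᵢ[ℝ] EuclideanSpace ℝ (Fin d)) y⟫ < ⟪x', uy⟫} := by
      ext x'; simp [hU, Set.mem_iInter]
    rw [this]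
    refine isOpen_iInter_of_finite fun g => ?_
    by_cases hgy : (g : EuclideanSpace ℝ (Fin d) ≃ₗᵢ[ℝ] EuclideanSpace ℝ (Fin d)) y = uy
    · simp [hgy]
    · have : {x' : EuclideanSpace ℝ (Fin d) |
          (g : EuclideanSpace ℝ (Fin d) ≃ₗᵢ[ℝ] EuclideanSpace ℝ (Fin d)) y ≠ uy →
          ⟪x', (g : EuclideanSpace ℝ (Fin d) ≃ₗᵢ[ℝ] EuclideanSpace ℝ (Fin d)) y⟫ < ⟪x', uy⟫}
          = {x' : EuclideanSpace ℝ (Fin d) |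
            ⟪x', (g : EuclideanSpace ℝ (Fin d) ≃ₗᵢ[ℝ] EuclideanSpace ℝ (Fin d)) y⟫ < ⟪x', uy⟫} := by
        ext x'; simp [hgy]
      rw [this]
      exact isOpen_lt (continuous_id.inner continuous_const) (continuous_id.inner continuous_const)
  have hxU : x ∈ U := fun g hg => hmax g hg
  have heq : ∀ x' ∈ U, maxFilter G y x' = ⟪uy, x'⟫ := by
    intro x' hx'
    refine le_antisymm (ciSup_le fun g => ?_) ?_
    · by_cases hgy : (g : EuclideanSpace ℝ (Fin d) ≃ₗᵢ[ℝ] EuclideanSpace ℝ (Fin d)) y = uy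
      · rw [hgy, real_inner_comm]
      · calc inner ℝ x' ((g : EuclideanSpace ℝ (Fin d) ≃ₗᵢ[ℝ] EuclideanSpace ℝ (Fin d)) y)
            ≤ ⟪x', uy⟫ := (hx' g hgy).le
        _ = ⟪uy, x'⟫ := real_inner_comm _ _
    · rw [real_inner_comm]
      calc ⟪x', uy⟫
          = ⟪x', (g₀ : EuclideanSpace ℝ (Fin d) ≃ₗᵢ[ℝ] EuclideanSpace ℝ (Fin d)) y⟫ := by rw [hg₀]
      _ ≤ maxFilter G y x' := le_ciSup (bddAbove_range y x') g₀
  have : HasFDerivAt (fun x' => ⟪uy, x'⟫) (innerSL ℝ uy) x := (innerSL ℝ uy).hasFDerivAt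
  refine this.congr_of_eventuallyEq ?_
  filter_upwards [hUopen.mem_nhds hxU] with x' hx'
  exact heq x' hx'

end MaxFilterAux

open MaxFilterAux

/-- **Differentiation under the integral sign for integral combinations of max filters.**
Let `G ≤ O(d)` be finite, `q ∈ L¹(S^{d−1}, ω)` and
`p(x) = ∫_{S^{d−1}} q(y)·max_{g∈G}⟨x, gy⟩ dω(y)`.  If `x` has trivial stabilizer in `G`
and `u(y)` is a measurable a.e. selection of maximizers of `⟨x, ·⟩` on the orbit `G·y`,
then `p` is differentiable at `x` with gradient `∫ q(y) u(y) dω(y)`. -/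
theorem stmt_6 (d : ℕ)
    (G : Subgroup (EuclideanSpace ℝ (Fin d) ≃ₗᵢ[ℝ] EuclideanSpace ℝ (Fin d)))
    [Finite G]
    (q : sphere (0 : EuclideanSpace ℝ (Fin d)) 1 → ℝ)
    (hq : Integrable q (sphereMeasure d))
    (x : EuclideanSpace ℝ (Fin d))
    (hx : ∀ g : G,
      (g : EuclideanSpace ℝ (Fin d) ≃ₗᵢ[ℝ] EuclideanSpace ℝ (Fin d)) x = x → g = 1)
    (u : sphere (0 : EuclideanSpace ℝ (Fin d)) 1 → EuclideanSpace ℝ (Fin d))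
    (hu_meas : AEStronglyMeasurable u (sphereMeasure d))
    (hu : ∀ᵐ (y : sphere (0 : EuclideanSpace ℝ (Fin d)) 1) ∂(sphereMeasure d),
      (∃ g : G, (g : EuclideanSpace ℝ (Fin d) ≃ₗᵢ[ℝ] EuclideanSpace ℝ (Fin d))
          (↑y : EuclideanSpace ℝ (Fin d)) = u y) ∧
        ⟪x, u y⟫ = maxFilter G (↑y : EuclideanSpace ℝ (Fin d)) x) :
    HasGradientAt
      (fun x' : EuclideanSpace ℝ (Fin d) =>
        ∫ y, q y * maxFilter G (↑y : EuclideanSpace ℝ (Fin d)) x' ∂(sphereMeasure d))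
      (∫ y, q y • u y ∂(sphereMeasure d)) x := by
  classical
  have hne : Nonempty G := ⟨1⟩
  -- adjoint identity
  have hadj : ∀ (g : G) (z w : EuclideanSpace ℝ (Fin d)),
      ⟪z, (g : EuclideanSpace ℝ (Fin d) ≃ₗᵢ[ℝ] EuclideanSpace ℝ (Fin d)) w⟫
        = ⟪((g⁻¹ : G) : EuclideanSpace ℝ (Fin d) ≃ₗᵢ[ℝ] EuclideanSpace ℝ (Fin d)) z, w⟫ := by
    intro g z w
    have h1 : (g : EuclideanSpace ℝ (Fin d) ≃ₗᵢ[ℝ] EuclideanSpace ℝ (Fin d))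
        (((g⁻¹ : G) : EuclideanSpace ℝ (Fin d) ≃ₗᵢ[ℝ] EuclideanSpace ℝ (Fin d)) z) = z := by
      simp
    conv_lhs => rw [← h1]
    rw [LinearIsometryEquiv.inner_map_map]
  -- distinct group elements give distinct images of x under inverses
  have hxinj : ∀ g g' : G, g ≠ g' →
      ((g⁻¹ : G) : EuclideanSpace ℝ (Fin d) ≃ₗᵢ[ℝ] EuclideanSpace ℝ (Fin d)) x
        - ((g'⁻¹ : G) : EuclideanSpace ℝ (Fin d) ≃ₗᵢ[ℝ] EuclideanSpace ℝ (Fin d)) x ≠ 0 := by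
    intro g g' hgg' h0
    have heq : ((g⁻¹ : G) : EuclideanSpace ℝ (Fin d) ≃ₗᵢ[ℝ] EuclideanSpace ℝ (Fin d)) x
        = ((g'⁻¹ : G) : EuclideanSpace ℝ (Fin d) ≃ₗᵢ[ℝ] EuclideanSpace ℝ (Fin d)) x :=
      sub_eq_zero.mp h0
    have h2 : ∀ a b : G, ((a * b : G) : EuclideanSpace ℝ (Fin d) ≃ₗᵢ[ℝ] EuclideanSpace ℝ (Fin d)) x
        = (a : EuclideanSpace ℝ (Fin d) ≃ₗᵢ[ℝ] EuclideanSpace ℝ (Fin d))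
          ((b : EuclideanSpace ℝ (Fin d) ≃ₗᵢ[ℝ] EuclideanSpace ℝ (Fin d)) x) := fun a b => by
      rw [Subgroup.coe_mul, LinearIsometryEquiv.coe_mul]; rfl
    have : ((g' * g⁻¹ : G) : EuclideanSpace ℝ (Fin d) ≃ₗᵢ[ℝ] EuclideanSpace ℝ (Fin d)) x = x := by
      rw [h2, heq, ← h2, mul_inv_cancel]
      simp
    have := hx _ this
    rw [mul_inv_eq_one] at this
    exact hgg' this.symm
  -- the bad set of templates with ties
  set B : Set (sphere (0 : EuclideanSpace ℝ (Fin d)) 1) :=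
    ⋃ (p : G × G) (_ : p.1 ≠ p.2),
      {y : sphere (0 : EuclideanSpace ℝ (Fin d)) 1 |
        ⟪((p.1⁻¹ : G) : EuclideanSpace ℝ (Fin d) ≃ₗᵢ[ℝ] EuclideanSpace ℝ (Fin d)) x
          - ((p.2⁻¹ : G) : EuclideanSpace ℝ (Fin d) ≃ₗᵢ[ℝ] EuclideanSpace ℝ (Fin d)) x,
          (y : EuclideanSpace ℝ (Fin d))⟫ = 0} with hBdef
  have hB : sphereMeasure d B = 0 := by
    have : Countable G := Countable.of_equiv _ (Equiv.refl _)
    refine measure_iUnion_null fun p => ?_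
    refine measure_iUnion_null fun hp => ?_
    exact sphere_hyperplane_null _ (hxinj p.1 p.2 hp)
  have hBc : ∀ᵐ y ∂(sphereMeasure d), y ∉ B := by
    rw [ae_iff]; simpa using hB
  -- a.e. differentiability
  have hdiff : ∀ᵐ y ∂(sphereMeasure d),
      HasFDerivAt (fun x' => q y * maxFilter G (↑y : EuclideanSpace ℝ (Fin d)) x')
        (q y • innerSL ℝ (u y)) x := by
    filter_upwards [hu, hBc] with y hy hyB
    obtain ⟨⟨g₀, hg₀⟩, hmaxy⟩ := hy
    have key : ∀ g : G,
        ⟪x, (g : EuclideanSpace ℝ (Fin d) ≃ₗᵢ[ℝ] EuclideanSpace ℝ (Fin d))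
          (↑y : EuclideanSpace ℝ (Fin d))⟫ = ⟪x, u y⟫ →
        (g : EuclideanSpace ℝ (Fin d) ≃ₗᵢ[ℝ] EuclideanSpace ℝ (Fin d))
          (↑y : EuclideanSpace ℝ (Fin d)) = u y := by
      intro g hg
      by_cases hgg₀ : g = g₀
      · rw [hgg₀, hg₀]
      · exfalso
        apply hyB
        rw [hBdef]
        refine Set.mem_iUnion.2 ⟨(g, g₀), Set.mem_iUnion.2 ⟨hgg₀, ?_⟩⟩
        have : ⟪x, (g : EuclideanSpace ℝ (Fin d) ≃ₗᵢ[ℝ] EuclideanSpace ℝ (Fin d))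
            (↑y : EuclideanSpace ℝ (Fin d))⟫
            = ⟪x, (g₀ : EuclideanSpace ℝ (Fin d) ≃ₗᵢ[ℝ] EuclideanSpace ℝ (Fin d))
              (↑y : EuclideanSpace ℝ (Fin d))⟫ := by rw [hg, hg₀]
        rw [hadj, hadj] at this
        simp only [Set.mem_setOf_eq, inner_sub_left]
        rw [this]; ring
    have hmax : ∀ g : G,
        (g : EuclideanSpace ℝ (Fin d) ≃ₗᵢ[ℝ] EuclideanSpace ℝ (Fin d))
          (↑y : EuclideanSpace ℝ (Fin d)) ≠ u y →
        ⟪x, (g : EuclideanSpace ℝ (Fin d) ≃ₗᵢ[ℝ] EuclideanSpace ℝ (Fin d))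
          (↑y : EuclideanSpace ℝ (Fin d))⟫ < ⟪x, u y⟫ := by
      intro g hg
      refine lt_of_le_of_ne ?_ fun h => hg (key g h)
      rw [hmaxy]
      exact le_ciSup (bddAbove_range _ x) g
    exact (hasFDerivAt_maxFilter x _ (u y) g₀ hg₀ hmax).const_mul (q y)
  -- norms of u are a.e. 1
  have hunorm : ∀ᵐ y ∂(sphereMeasure d), ‖u y‖ = 1 := by
    filter_upwards [hu] with y hy
    obtain ⟨⟨g₀, hg₀⟩, -⟩ := hy
    rw [← hg₀, LinearIsometryEquiv.norm_map]
    exact mem_sphere_zero_iff_norm.mp y.2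
  -- apply differentiation under the integral sign
  have main := hasFDerivAt_integral_of_dominated_loc_of_lip'
    (μ := sphereMeasure d)
    (F := fun x' (y : sphere (0 : EuclideanSpace ℝ (Fin d)) 1) =>
      q y * maxFilter G (↑y : EuclideanSpace ℝ (Fin d)) x')
    (F' := fun y => q y • innerSL ℝ (u y))
    (x₀ := x) (bound := fun y => |q y|) (s := ball x 1) (ball_mem_nhds x zero_lt_one)
    (fun x' _ => hq.aestronglyMeasurable.mul
      (((continuous_maxFilter x').comp continuous_subtype_val).aestronglyMeasurable))
    ?_ ?_ ?_ (hq.abs) hdiff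
  · obtain ⟨-, hFd⟩ := main
    rw [hasGradientAt_iff_hasFDerivAt]
    have hqu_int : Integrable (fun y => q y • u y) (sphereMeasure d) := by
      refine hq.norm.mono' (hq.aestronglyMeasurable.smul hu_meas) ?_
      filter_upwards [hunorm] with y hy
      rw [norm_smul, hy, mul_one]
    have hconv : (InnerProductSpace.toDual ℝ (EuclideanSpace ℝ (Fin d)))
        (∫ y, q y • u y ∂(sphereMeasure d)) = ∫ y, q y • innerSL ℝ (u y) ∂(sphereMeasure d) := by
      have h1 : ∀ y, q y • innerSL ℝ (u y) = innerSL ℝ (q y • u y) := by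
        intro y; exact ((innerSL ℝ).map_smul (q y) (u y)).symm
      simp_rw [h1]
      rw [ContinuousLinearMap.integral_comp_comm (innerSL ℝ) hqu_int]
      exact ContinuousLinearMap.ext fun z => by
        rw [InnerProductSpace.toDual_apply_apply, innerSL_apply_apply]
    rw [hconv]
    exact hFd
  · -- integrability at x
    refine (hq.norm.mul_const ‖x‖).mono'
      (hq.aestronglyMeasurable.mul
        (((continuous_maxFilter x).comp continuous_subtype_val).aestronglyMeasurable)) ?_
    refine Filter.Eventually.of_forall fun y => ?_
    rw [Real.norm_eq_abs, abs_mul]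
    have := abs_maxFilter_le (G := G) (↑y : EuclideanSpace ℝ (Fin d)) x
    rw [mem_sphere_zero_iff_norm.mp y.2, mul_one] at this
    calc |q y| * |maxFilter G (↑y : EuclideanSpace ℝ (Fin d)) x| ≤ |q y| * ‖x‖ :=
        mul_le_mul_of_nonneg_left this (abs_nonneg _)
    _ = ‖q y‖ * ‖x‖ := by rw [Real.norm_eq_abs]
  · -- measurability of F'
    exact hq.aestronglyMeasurable.smul
      ((innerSL ℝ).continuous.comp_aestronglyMeasurable hu_meas)
  · -- Lipschitz bound
    refine Filter.Eventually.of_forall fun y => fun x' _ => ?_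
    rw [← mul_sub, Real.norm_eq_abs, abs_mul]
    have := abs_maxFilter_sub_le (G := G) (↑y : EuclideanSpace ℝ (Fin d)) x' x
    rw [mem_sphere_zero_iff_norm.mp y.2, one_mul] at this
    exact mul_le_mul_of_nonneg_left this (abs_nonneg _)
end
end

section
/- Let G be a finite subgroup of O(d) and let ω be the surface measure on the unit sphere S^{d−1} ⊆ ℝ^d. If x ∈ ℝ^d has trivial stabilizer in G (g·x = x implies g = identity), then the set B of all y ∈ S^{d−1} for which the maximum of ⟨x, u⟩ over u in the orbit G·y is attained at more than one point of G·y (i.e., there exist u ≠ u′ in G·y with ⟨x,u⟩ = ⟨x,u′⟩ = max_{g∈G} ⟨x, g y⟩) has ω-measure zero. -/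
noncomputable section

open MeasureTheory Metric
open scoped RealInnerProductSpace Pointwise

/-- The set of sphere points perpendicular to a nonzero vector has sphere measure zero. -/
lemma sphereMeasure_perp_zero (d : ℕ) (v : EuclideanSpace ℝ (Fin d)) (hv : v ≠ 0) :
    sphereMeasure d {y : sphere (0 : EuclideanSpace ℝ (Fin d)) 1 |
      ⟪v, (y : EuclideanSpace ℝ (Fin d))⟫ = 0} = 0 := by
  set s : Set (sphere (0 : EuclideanSpace ℝ (Fin d)) 1) :=
    {y | ⟪v, (y : EuclideanSpace ℝ (Fin d))⟫ = 0} with hsdef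
  have hcont : Continuous fun y : sphere (0 : EuclideanSpace ℝ (Fin d)) 1 =>
      ⟪v, (y : EuclideanSpace ℝ (Fin d))⟫ :=
    Continuous.inner continuous_const continuous_subtype_val
  have hs : MeasurableSet s :=
    (isClosed_singleton.preimage hcont :
      IsClosed ((fun y : sphere (0 : EuclideanSpace ℝ (Fin d)) 1 =>
        ⟪v, (y : EuclideanSpace ℝ (Fin d))⟫) ⁻¹' {(0 : ℝ)})).measurableSet
  rw [sphereMeasure, Measure.toSphere_apply' volume hs]
  have hker : (LinearMap.ker (innerSL ℝ v : EuclideanSpace ℝ (Fin d) →ₗ[ℝ] ℝ) :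
      Submodule ℝ (EuclideanSpace ℝ (Fin d))) ≠ ⊤ := by
    intro h
    have hmem : v ∈ LinearMap.ker (innerSL ℝ v : EuclideanSpace ℝ (Fin d) →ₗ[ℝ] ℝ) := h ▸ Submodule.mem_top
    have : ⟪v, v⟫ = 0 := by simpa using hmem
    exact hv (inner_self_eq_zero.mp this)
  have hsub : Set.Ioo (0 : ℝ) 1 • (Subtype.val '' s) ⊆
      (LinearMap.ker (innerSL ℝ v : EuclideanSpace ℝ (Fin d) →ₗ[ℝ] ℝ) : Set (EuclideanSpace ℝ (Fin d))) := by
    rintro z ⟨c, hc, w, ⟨y, hy, rfl⟩, rfl⟩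
    simp only [SetLike.mem_coe, LinearMap.mem_ker, ContinuousLinearMap.coe_coe, innerSL_apply_apply]
    have h0 : ⟪v, (y : EuclideanSpace ℝ (Fin d))⟫ = 0 := hy
    rw [real_inner_smul_right, h0, mul_zero]
  have hz : volume (Set.Ioo (0 : ℝ) 1 • (Subtype.val '' s)) = 0 :=
    measure_mono_null hsub
      (Measure.addHaar_submodule volume (LinearMap.ker (innerSL ℝ v : EuclideanSpace ℝ (Fin d) →ₗ[ℝ] ℝ)) hker)
  rw [hz, mul_zero]

/-- If `x ∈ ℝ^d` has trivial stabilizer in a finite subgroup `G` of the orthogonal group,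
then the set `B` of points `y` of the unit sphere whose orbit `G·y` contains two distinct
maximizers of `⟨x, ·⟩` has surface measure zero. -/
theorem stmt_7 (d : ℕ)
    (G : Subgroup (EuclideanSpace ℝ (Fin d) ≃ₗᵢ[ℝ] EuclideanSpace ℝ (Fin d)))
    [Finite G] (x : EuclideanSpace ℝ (Fin d))
    (hx : ∀ g : G,
      (g : EuclideanSpace ℝ (Fin d) ≃ₗᵢ[ℝ] EuclideanSpace ℝ (Fin d)) x = x → g = 1) :
    sphereMeasure d
      {y : sphere (0 : EuclideanSpace ℝ (Fin d)) 1 |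
        ∃ u u' : EuclideanSpace ℝ (Fin d),
          (∃ g : G, (g : EuclideanSpace ℝ (Fin d) ≃ₗᵢ[ℝ] EuclideanSpace ℝ (Fin d))
              (y : EuclideanSpace ℝ (Fin d)) = u) ∧
          (∃ g' : G, (g' : EuclideanSpace ℝ (Fin d) ≃ₗᵢ[ℝ] EuclideanSpace ℝ (Fin d))
              (y : EuclideanSpace ℝ (Fin d)) = u') ∧
          u ≠ u' ∧
          ⟪x, u⟫ = maxFilter G (y : EuclideanSpace ℝ (Fin d)) x ∧
          ⟪x, u'⟫ = maxFilter G (y : EuclideanSpace ℝ (Fin d)) x} = 0 := by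
  set v : G → G → EuclideanSpace ℝ (Fin d) := fun g g' =>
    (g : EuclideanSpace ℝ (Fin d) ≃ₗᵢ[ℝ] EuclideanSpace ℝ (Fin d)).symm x -
    (g' : EuclideanSpace ℝ (Fin d) ≃ₗᵢ[ℝ] EuclideanSpace ℝ (Fin d)).symm x with hv
  have hvne : ∀ g g' : G, g ≠ g' → v g g' ≠ 0 := by
    intro g g' hne h0
    have heq : (g : EuclideanSpace ℝ (Fin d) ≃ₗᵢ[ℝ] EuclideanSpace ℝ (Fin d)).symm x =
        (g' : EuclideanSpace ℝ (Fin d) ≃ₗᵢ[ℝ] EuclideanSpace ℝ (Fin d)).symm x :=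
      sub_eq_zero.mp h0
    have hfix : ((g * g'⁻¹ : G) :
        EuclideanSpace ℝ (Fin d) ≃ₗᵢ[ℝ] EuclideanSpace ℝ (Fin d)) x = x := by
      have h2 : ((g * g'⁻¹ : G) :
          EuclideanSpace ℝ (Fin d) ≃ₗᵢ[ℝ] EuclideanSpace ℝ (Fin d)) x
          = (g : EuclideanSpace ℝ (Fin d) ≃ₗᵢ[ℝ] EuclideanSpace ℝ (Fin d))
            (((g'⁻¹ : G) :
              EuclideanSpace ℝ (Fin d) ≃ₗᵢ[ℝ] EuclideanSpace ℝ (Fin d)) x) := rfl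
      have h1 : ((g'⁻¹ : G) :
          EuclideanSpace ℝ (Fin d) ≃ₗᵢ[ℝ] EuclideanSpace ℝ (Fin d)) x
          = (g' : EuclideanSpace ℝ (Fin d) ≃ₗᵢ[ℝ] EuclideanSpace ℝ (Fin d)).symm x := rfl
      rw [h2, h1, ← heq]
      exact (g : EuclideanSpace ℝ (Fin d) ≃ₗᵢ[ℝ]
        EuclideanSpace ℝ (Fin d)).apply_symm_apply x
    have h1 := hx _ hfix
    exact hne (by rwa [mul_inv_eq_one] at h1)
  apply measure_mono_null
    (t := ⋃ p : {p : G × G // p.1 ≠ p.2},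
      {y : sphere (0 : EuclideanSpace ℝ (Fin d)) 1 |
        ⟪v p.1.1 p.1.2, (y : EuclideanSpace ℝ (Fin d))⟫ = 0})
  · rintro y ⟨u, u', ⟨g, rfl⟩, ⟨g', rfl⟩, hne, h1, h2⟩
    have hgg' : g ≠ g' := fun h => hne (by rw [h])
    refine Set.mem_iUnion.mpr ⟨⟨(g, g'), hgg'⟩, ?_⟩
    have e1 : ⟪(g : EuclideanSpace ℝ (Fin d) ≃ₗᵢ[ℝ] EuclideanSpace ℝ (Fin d)).symm x,
        (y : EuclideanSpace ℝ (Fin d))⟫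
        = ⟪x, (g : EuclideanSpace ℝ (Fin d) ≃ₗᵢ[ℝ] EuclideanSpace ℝ (Fin d))
            (y : EuclideanSpace ℝ (Fin d))⟫ := by
      conv_rhs => rw [← (g : EuclideanSpace ℝ (Fin d) ≃ₗᵢ[ℝ]
        EuclideanSpace ℝ (Fin d)).apply_symm_apply x]
      rw [LinearIsometryEquiv.inner_map_map]
    have e2 : ⟪(g' : EuclideanSpace ℝ (Fin d) ≃ₗᵢ[ℝ] EuclideanSpace ℝ (Fin d)).symm x,
        (y : EuclideanSpace ℝ (Fin d))⟫
        = ⟪x, (g' : EuclideanSpace ℝ (Fin d) ≃ₗᵢ[ℝ] EuclideanSpace ℝ (Fin d))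
            (y : EuclideanSpace ℝ (Fin d))⟫ := by
      conv_rhs => rw [← (g' : EuclideanSpace ℝ (Fin d) ≃ₗᵢ[ℝ]
        EuclideanSpace ℝ (Fin d)).apply_symm_apply x]
      rw [LinearIsometryEquiv.inner_map_map]
    show ⟪v g g', (y : EuclideanSpace ℝ (Fin d))⟫ = 0
    rw [hv]
    simp only
    rw [inner_sub_left, e1, e2, h1, h2, sub_self]
  · exact measure_iUnion_null fun p =>
      sphereMeasure_perp_zero d _ (hvne p.1.1 p.1.2 p.2)
end
end

section
/- Let G be a finite subgroup of O(d), let ω be the surface measure on the unit sphere S^{d−1} ⊆ ℝ^d, let q : S^{d−1} → ℝ be Lipschitz, and let p : ℝ^d → ℝ be positively homogeneous (p(r x) = r·p(x) for all r ≥ 0, x ∈ ℝ^d) with p(x) = ∫_{S^{d−1}} q(y) · max_{g∈G} ⟨x, g y⟩ dω(y) for all x ∈ S^{d−1}. Then p lies in the Lipschitz closure of the span of max filters with unit-norm templates: for every ε > 0 there exist N ∈ ℕ, templates y₁, …, y_N ∈ S^{d−1}, and coefficients c₁, …, c_N ∈ ℝ such that β(p − Σ_{k=1}^N c_k · max_{g∈G}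 ⟨·, g y_k⟩) < ε. -/
noncomputable section

open MeasureTheory Metric
open scoped RealInnerProductSpace
open scoped Pointwise ENNReal

set_option linter.unusedSectionVars false
namespace MFAux

variable {d : ℕ} {G : Subgroup (EuclideanSpace ℝ (Fin d) ≃ₗᵢ[ℝ] EuclideanSpace ℝ (Fin d))}
  [Finite G]

local notation "Ed" => EuclideanSpace ℝ (Fin d)

lemma inner_flip (g : G) (x w : Ed) :
    ⟪x, (g : Ed ≃ₗᵢ[ℝ] Ed) w⟫ = ⟪(g : Ed ≃ₗᵢ[ℝ] Ed).symm x, w⟫ := by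
  rw [LinearIsometryEquiv.inner_map_eq_flip]; simp

lemma le_maxFilter (g : G) (y x : Ed) :
    ⟪x, (g : Ed ≃ₗᵢ[ℝ] Ed) y⟫ ≤ maxFilter G y x :=
  le_ciSup (f := fun g : G => ⟪x, (g : Ed ≃ₗᵢ[ℝ] Ed) y⟫)
    (Set.Finite.bddAbove (Set.finite_range _)) g

lemma exists_maxFilter (y x : Ed) :
    ∃ g : G, maxFilter G y x = ⟪x, (g : Ed ≃ₗᵢ[ℝ] Ed) y⟫ := by
  obtain ⟨g, hg⟩ := exists_eq_ciSup_of_finite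
    (f := fun g : G => ⟪x, (g : Ed ≃ₗᵢ[ℝ] Ed) y⟫)
  exact ⟨g, hg.symm⟩

/-- `va g w = g⁻¹ w`. -/
def va (g : G) (w : Ed) : Ed := (g : Ed ≃ₗᵢ[ℝ] Ed).symm w

lemma va_norm (g : G) (w : Ed) : ‖va g w‖ = ‖w‖ := LinearIsometryEquiv.norm_map _ _

lemma va_sub (g : G) (w w' : Ed) : va g w - va g w' = va g (w - w') := by
  rw [va, va, va, map_sub]

lemma inner_va (g : G) (x w : Ed) : ⟪x, (g : Ed ≃ₗᵢ[ℝ] Ed) w⟫ = ⟪va g x, w⟫ :=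
  inner_flip g x w

/-- one-sided core estimate with argmax pair -/
lemma core (x z : Ed) (y y' : sphere (0 : Ed) 1) :
    ∃ a b : G,
      (maxFilter G ↑y x - maxFilter G ↑y z) - (maxFilter G ↑y' x - maxFilter G ↑y' z)
        ≤ ⟪va a x - va b z, (y : Ed) - ↑y'⟫ ∧
      0 ≤ ⟪va a x - va b x, (y : Ed)⟫ ∧
      ⟪va a z - va b z, (y' : Ed)⟫ ≤ 0 := by
  obtain ⟨a, ha⟩ := exists_maxFilter (G := G) (↑y) x
  obtain ⟨b, hb⟩ := exists_maxFilter (G := G) (↑y') z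
  have h1 : ⟪x, (a : Ed ≃ₗᵢ[ℝ] Ed) ↑y'⟫ ≤ maxFilter G ↑y' x := le_maxFilter a _ x
  have h2 : ⟪z, (b : Ed ≃ₗᵢ[ℝ] Ed) ↑y⟫ ≤ maxFilter G ↑y z := le_maxFilter b _ z
  have h3 : ⟪x, (b : Ed ≃ₗᵢ[ℝ] Ed) ↑y⟫ ≤ maxFilter G ↑y x := le_maxFilter b _ x
  have h4 : ⟪z, (a : Ed ≃ₗᵢ[ℝ] Ed) ↑y'⟫ ≤ maxFilter G ↑y' z := le_maxFilter a _ z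
  refine ⟨a, b, ?_, ?_, ?_⟩
  · have e : ⟪va a x - va b z, (y : Ed) - ↑y'⟫
        = (⟪x, (a : Ed ≃ₗᵢ[ℝ] Ed) ↑y⟫ - ⟪x, (a : Ed ≃ₗᵢ[ℝ] Ed) ↑y'⟫)
          - (⟪z, (b : Ed ≃ₗᵢ[ℝ] Ed) ↑y⟫ - ⟪z, (b : Ed ≃ₗᵢ[ℝ] Ed) ↑y'⟫) := by
      rw [inner_sub_left, inner_sub_right, inner_sub_right,
        inner_va a x, inner_va b z, inner_va a x, inner_va b z]
    rw [e, ha, hb]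
    linarith
  · have e : ⟪va a x - va b x, (y : Ed)⟫
        = ⟪x, (a : Ed ≃ₗᵢ[ℝ] Ed) ↑y⟫ - ⟪x, (b : Ed ≃ₗᵢ[ℝ] Ed) ↑y⟫ := by
      rw [inner_sub_left, inner_va a x, inner_va b x]
    rw [e, ← ha]
    linarith
  · have e : ⟪va a z - va b z, (y' : Ed)⟫
        = ⟪z, (a : Ed ≃ₗᵢ[ℝ] Ed) ↑y'⟫ - ⟪z, (b : Ed ≃ₗᵢ[ℝ] Ed) ↑y'⟫ := by
      rw [inner_sub_left, inner_va a z, inner_va b z]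
    rw [e, ← hb]
    linarith

lemma norm_coe_sphere (y : sphere (0 : Ed) 1) : ‖(y : Ed)‖ = 1 := by
  have := y.2
  rwa [mem_sphere_zero_iff_norm] at this

/-- two-sided core estimate -/
lemma core2 (x z : Ed) {δ : ℝ} (hδ : 0 ≤ δ) (y y' : sphere (0 : Ed) 1)
    (hyy' : dist y y' ≤ δ) :
    ∃ a b : G,
      |(maxFilter G ↑y x - maxFilter G ↑y z) - (maxFilter G ↑y' x - maxFilter G ↑y' z)|
        ≤ ‖x - z‖ * δ + δ * ‖va a z - va b z‖ ∧
      -(δ * ‖va a x - va b x‖) ≤ ⟪va a x - va b x, (y : Ed)⟫ ∧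
      ⟪va a x - va b x, (y : Ed)⟫ ≤ δ * ‖va a z - va b z‖ + 2 * ‖x - z‖ := by
  have hdist : ‖(y : Ed) - ↑y'‖ ≤ δ := by
    rw [← dist_eq_norm, ← Subtype.dist_eq]; exact hyy'
  have hdist' : ‖(y' : Ed) - ↑y‖ ≤ δ := by rw [norm_sub_rev]; exact hdist
  have hys : ‖(y : Ed)‖ = 1 := norm_coe_sphere y
  rcases le_total (maxFilter G ↑y' x - maxFilter G ↑y' z)
    (maxFilter G ↑y x - maxFilter G ↑y z) with hc | hc
  · obtain ⟨a, b, hle, hax, hbz⟩ := core (G := G) x z y y'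
    refine ⟨a, b, ?_, ?_, ?_⟩
    · rw [abs_of_nonneg (by linarith)]
      have e : ⟪va a x - va b z, (y : Ed) - ↑y'⟫
          = ⟪va a x - va a z, (y : Ed) - ↑y'⟫ + ⟪va a z - va b z, (y : Ed) - ↑y'⟫ := by
        rw [← inner_add_left]; congr 1; abel
      have b1 : ⟪va a x - va a z, (y : Ed) - ↑y'⟫ ≤ ‖x - z‖ * δ := by
        calc ⟪va a x - va a z, (y : Ed) - ↑y'⟫ ≤ ‖va a x - va a z‖ * ‖(y : Ed) - ↑y'‖ :=
          real_inner_le_norm _ _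
        _ ≤ ‖x - z‖ * δ := by
            rw [va_sub, va_norm]
            exact mul_le_mul_of_nonneg_left hdist (norm_nonneg _)
      have b2 : ⟪va a z - va b z, (y : Ed) - ↑y'⟫ ≤ δ * ‖va a z - va b z‖ := by
        calc ⟪va a z - va b z, (y : Ed) - ↑y'⟫ ≤ ‖va a z - va b z‖ * ‖(y : Ed) - ↑y'‖ :=
          real_inner_le_norm _ _
        _ ≤ δ * ‖va a z - va b z‖ := by
            rw [mul_comm]
            exact mul_le_mul_of_nonneg_right hdist (norm_nonneg _)
      linarith
    · have : (0:ℝ) ≤ δ * ‖va a x - va b x‖ := by positivity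
      linarith
    · have e : ⟪va a x - va b x, (y : Ed)⟫
          = ⟪va a z - va b z, (y : Ed)⟫ + ⟪(va a x - va a z) - (va b x - va b z), (y : Ed)⟫ := by
        rw [← inner_add_left]; congr 1; abel
      have b1 : ⟪va a z - va b z, (y : Ed)⟫ ≤ δ * ‖va a z - va b z‖ := by
        have e2 : ⟪va a z - va b z, (y : Ed)⟫
            = ⟪va a z - va b z, (y' : Ed)⟫ + ⟪va a z - va b z, (y : Ed) - ↑y'⟫ := by
          rw [← inner_add_right]; congr 1; abel
        have b3 : ⟪va a z - va b z, (y : Ed) - ↑y'⟫ ≤ δ * ‖va a z - va b z‖ := by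
          calc ⟪va a z - va b z, (y : Ed) - ↑y'⟫ ≤ ‖va a z - va b z‖ * ‖(y : Ed) - ↑y'‖ :=
            real_inner_le_norm _ _
          _ ≤ δ * ‖va a z - va b z‖ := by
              rw [mul_comm]
              exact mul_le_mul_of_nonneg_right hdist (norm_nonneg _)
        linarith
      have b2 : ⟪(va a x - va a z) - (va b x - va b z), (y : Ed)⟫ ≤ 2 * ‖x - z‖ := by
        calc ⟪(va a x - va a z) - (va b x - va b z), (y : Ed)⟫
            ≤ ‖(va a x - va a z) - (va b x - va b z)‖ * ‖(y : Ed)‖ := real_inner_le_norm _ _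
        _ ≤ (‖va a x - va a z‖ + ‖va b x - va b z‖) * 1 := by
            rw [hys]
            exact mul_le_mul_of_nonneg_right (norm_sub_le _ _) zero_le_one
        _ = 2 * ‖x - z‖ := by rw [va_sub, va_norm, va_sub, va_norm]; ring
      linarith
  · obtain ⟨a, b, hle, hax, hbz⟩ := core (G := G) x z y' y
    refine ⟨a, b, ?_, ?_, ?_⟩
    · rw [abs_of_nonpos (by linarith)]
      have e : ⟪va a x - va b z, (y' : Ed) - ↑y⟫
          = ⟪va a x - va a z, (y' : Ed) - ↑y⟫ + ⟪va a z - va b z, (y' : Ed) - ↑y⟫ := by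
        rw [← inner_add_left]; congr 1; abel
      have b1 : ⟪va a x - va a z, (y' : Ed) - ↑y⟫ ≤ ‖x - z‖ * δ := by
        calc ⟪va a x - va a z, (y' : Ed) - ↑y⟫ ≤ ‖va a x - va a z‖ * ‖(y' : Ed) - ↑y‖ :=
          real_inner_le_norm _ _
        _ ≤ ‖x - z‖ * δ := by
            rw [va_sub, va_norm]
            exact mul_le_mul_of_nonneg_left hdist' (norm_nonneg _)
      have b2 : ⟪va a z - va b z, (y' : Ed) - ↑y⟫ ≤ δ * ‖va a z - va b z‖ := by
        calc ⟪va a z - va b z, (y' : Ed) - ↑y⟫ ≤ ‖va a z - va b z‖ * ‖(y' : Ed) - ↑y‖ :=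
          real_inner_le_norm _ _
        _ ≤ δ * ‖va a z - va b z‖ := by
            rw [mul_comm]
            exact mul_le_mul_of_nonneg_right hdist' (norm_nonneg _)
      linarith
    · have e2 : ⟪va a x - va b x, (y : Ed)⟫
          = ⟪va a x - va b x, (y' : Ed)⟫ + ⟪va a x - va b x, (y : Ed) - ↑y'⟫ := by
        rw [← inner_add_right]; congr 1; abel
      have b3 : -(δ * ‖va a x - va b x‖) ≤ ⟪va a x - va b x, (y : Ed) - ↑y'⟫ := by
        have := real_inner_le_norm (va a x - va b x) (↑y' - (y : Ed))
        have e3 : ⟪va a x - va b x, (y' : Ed) - ↑y⟫ = -⟪va a x - va b x, (y : Ed) - ↑y'⟫ := by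
          rw [← inner_neg_right]; congr 1; abel
        rw [e3] at this
        have h4 : ‖va a x - va b x‖ * ‖(y' : Ed) - ↑y‖ ≤ δ * ‖va a x - va b x‖ := by
          rw [mul_comm]
          exact mul_le_mul_of_nonneg_right hdist' (norm_nonneg _)
        linarith
      linarith
    · have e : ⟪va a x - va b x, (y : Ed)⟫
          = ⟪va a z - va b z, (y : Ed)⟫ + ⟪(va a x - va a z) - (va b x - va b z), (y : Ed)⟫ := by
        rw [← inner_add_left]; congr 1; abel
      have b2 : ⟪(va a x - va a z) - (va b x - va b z), (y : Ed)⟫ ≤ 2 * ‖x - z‖ := by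
        calc ⟪(va a x - va a z) - (va b x - va b z), (y : Ed)⟫
            ≤ ‖(va a x - va a z) - (va b x - va b z)‖ * ‖(y : Ed)‖ := real_inner_le_norm _ _
        _ ≤ (‖va a x - va a z‖ + ‖va b x - va b z‖) * 1 := by
            rw [hys]
            exact mul_le_mul_of_nonneg_right (norm_sub_le _ _) zero_le_one
        _ = 2 * ‖x - z‖ := by rw [va_sub, va_norm, va_sub, va_norm]; ring
      have : (0:ℝ) ≤ δ * ‖va a z - va b z‖ := by positivity
      linarith
lemma maxFilter_sub_le (y x z : Ed) :
    maxFilter G y x - maxFilter G y z ≤ ‖x - z‖ * ‖y‖ := by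
  obtain ⟨a, ha⟩ := exists_maxFilter (G := G) y x
  have h1 : ⟪z, (a : Ed ≃ₗᵢ[ℝ] Ed) y⟫ ≤ maxFilter G y z := le_maxFilter a y z
  have h2 : ⟪x - z, (a : Ed ≃ₗᵢ[ℝ] Ed) y⟫ ≤ ‖x - z‖ * ‖(a : Ed ≃ₗᵢ[ℝ] Ed) y‖ :=
    real_inner_le_norm _ _
  rw [LinearIsometryEquiv.norm_map] at h2
  have := inner_sub_left (𝕜 := ℝ) x z ((a : Ed ≃ₗᵢ[ℝ] Ed) y)
  rw [ha]
  linarith [this]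

lemma abs_maxFilter_sub (y x z : Ed) :
    |maxFilter G y x - maxFilter G y z| ≤ ‖x - z‖ * ‖y‖ := by
  rw [abs_sub_le_iff]
  refine ⟨maxFilter_sub_le y x z, ?_⟩
  have := maxFilter_sub_le (G := G) y z x
  rwa [norm_sub_rev] at this

lemma maxFilter_sub_le' (y y' x : Ed) :
    maxFilter G y x - maxFilter G y' x ≤ ‖x‖ * ‖y - y'‖ := by
  obtain ⟨a, ha⟩ := exists_maxFilter (G := G) y x
  have h1 : ⟪x, (a : Ed ≃ₗᵢ[ℝ] Ed) y'⟫ ≤ maxFilter G y' x := le_maxFilter a y' x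
  have h2 : ⟪x, (a : Ed ≃ₗᵢ[ℝ] Ed) y - (a : Ed ≃ₗᵢ[ℝ] Ed) y'⟫
      ≤ ‖x‖ * ‖(a : Ed ≃ₗᵢ[ℝ] Ed) y - (a : Ed ≃ₗᵢ[ℝ] Ed) y'‖ := real_inner_le_norm _ _
  rw [← LinearIsometryEquiv.map_sub, LinearIsometryEquiv.norm_map] at h2
  have h3 := inner_sub_right (𝕜 := ℝ) x ((a : Ed ≃ₗᵢ[ℝ] Ed) y) ((a : Ed ≃ₗᵢ[ℝ] Ed) y')
  rw [LinearIsometryEquiv.map_sub] at h2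
  rw [ha]
  linarith [h2, h3]

lemma abs_maxFilter_sub' (y y' x : Ed) :
    |maxFilter G y x - maxFilter G y' x| ≤ ‖x‖ * ‖y - y'‖ := by
  rw [abs_sub_le_iff]
  refine ⟨maxFilter_sub_le' y y' x, ?_⟩
  have := maxFilter_sub_le' (G := G) y' y x
  rwa [norm_sub_rev] at this

lemma maxFilter_smul (y x : Ed) {r : ℝ} (hr : 0 ≤ r) :
    maxFilter G y (r • x) = r * maxFilter G y x := by
  apply le_antisymm
  · obtain ⟨a, ha⟩ := exists_maxFilter (G := G) y (r • x)
    rw [ha, real_inner_smul_left]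
    exact mul_le_mul_of_nonneg_left (le_maxFilter a y x) hr
  · obtain ⟨a, ha⟩ := exists_maxFilter (G := G) y x
    rw [ha, ← real_inner_smul_left]
    exact le_maxFilter a y (r • x)

lemma continuous_maxFilter (x : Ed) :
    Continuous fun y : sphere (0 : Ed) 1 => maxFilter G (↑y) x := by
  have : LipschitzWith ‖x‖₊ fun y : sphere (0 : Ed) 1 => maxFilter G (↑y) x := by
    apply LipschitzWith.of_dist_le_mul
    intro y y'
    rw [Real.dist_eq, Subtype.dist_eq, dist_eq_norm]
    calc |maxFilter G (↑y) x - maxFilter G (↑y') x| ≤ ‖x‖ * ‖(y : Ed) - ↑y'‖ :=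
      abs_maxFilter_sub' _ _ x
    _ = ↑‖x‖₊ * ‖(y : Ed) - ↑y'‖ := by rw [coe_nnnorm]
  exact this.continuous

lemma slab_measure (u : Ed) (hu : u ≠ 0) {α β : ℝ} (hα : α ≤ 0) (hβ : 0 ≤ β) :
    sphereMeasure d {y : sphere (0 : Ed) 1 | ⟪u, (y : Ed)⟫ ∈ Set.Icc α β} ≤
      ENNReal.ofReal ((d : ℝ) * 2 ^ d * ((β - α) / ‖u‖)) := by
  classical
  have hd : 0 < d := by
    rcases Nat.eq_zero_or_pos d with h | h
    · exfalso; subst h; exact hu (Subsingleton.elim u 0)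
    · exact h
  have hnu : (0 : ℝ) < ‖u‖ := norm_pos_iff.mpr hu
  set i₀ : Fin d := ⟨0, hd⟩
  set u1 : Ed := ‖u‖⁻¹ • u with hu1
  have hu1n : ‖u1‖ = 1 := norm_smul_inv_norm hu
  -- orthonormal basis with `b i₀ = u1`
  have hortho : Orthonormal ℝ (({i₀} : Set (Fin d)).restrict (fun _ => u1)) := by
    rw [orthonormal_iff_ite]
    intro i j
    have hij : i = j := Subsingleton.elim i j
    subst hij
    rw [if_pos rfl]
    show ⟪u1, u1⟫ = 1
    rw [real_inner_self_eq_norm_mul_norm, hu1n]; norm_num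
  obtain ⟨b, hb⟩ := hortho.exists_orthonormalBasis_extension_of_card_eq
    (by simp [finrank_euclideanSpace_fin])
  have hbi₀ : b i₀ = u1 := hb i₀ rfl
  -- the box
  set s : Fin d → Set ℝ :=
    fun i => if i = i₀ then Set.Icc (α / ‖u‖) (β / ‖u‖) else Set.Icc (-1) 1 with hs
  have hmeas_s : ∀ i, MeasurableSet (s i) := by
    intro i; simp only [hs]; split <;> exact measurableSet_Icc
  set T : Set Ed :=
    b.repr ⁻¹' (((MeasurableEquiv.toLp 2 (Fin d → ℝ)).symm) ⁻¹' (Set.pi Set.univ s)) with hT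
  have hScont : Continuous fun y : sphere (0 : Ed) 1 => ⟪u, (y : Ed)⟫ :=
    Continuous.inner continuous_const continuous_subtype_val
  have hSmeas : MeasurableSet {y : sphere (0 : Ed) 1 | ⟪u, (y : Ed)⟫ ∈ Set.Icc α β} :=
    hScont.measurable measurableSet_Icc
  rw [sphereMeasure, Measure.toSphere_apply' _ hSmeas]
  -- inclusion into the box
  have hincl : (Set.Ioo (0:ℝ) 1 •
      ((↑) '' {y : sphere (0 : Ed) 1 | ⟪u, (y : Ed)⟫ ∈ Set.Icc α β})) ⊆ T := by
    rintro w hw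
    rw [Set.mem_smul] at hw
    obtain ⟨r, hr, v, hv, rfl⟩ := hw
    obtain ⟨y, hy, rfl⟩ := hv
    obtain ⟨hy1, hy2⟩ := hy
    have hvn : ‖(y : Ed)‖ = 1 := by
      have := y.2
      rwa [mem_sphere_zero_iff_norm] at this
    obtain ⟨hr0, hr1⟩ := hr
    intro i _
    have happ : b.repr (r • (y : Ed)) i = r * b.repr (y : Ed) i := by
      rw [_root_.map_smul]; rfl
    have hrepr : b.repr (y : Ed) i = ⟪b i, (y : Ed)⟫ := b.repr_apply_apply _ _
    show b.repr (r • (y : Ed)) i ∈ s i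
    rw [hs]
    by_cases hi : i = i₀
    · subst hi
      simp only [eq_self_iff_true, if_true, if_pos]
      rw [happ, hrepr, hbi₀, hu1, real_inner_smul_left]
      constructor
      · have h1 : α / ‖u‖ ≤ ‖u‖⁻¹ * ⟪u, (y : Ed)⟫ := by
          rw [div_eq_inv_mul]
          exact mul_le_mul_of_nonneg_left hy1 (by positivity)
        have h2 : α / ‖u‖ ≤ 0 := div_nonpos_of_nonpos_of_nonneg hα (le_of_lt hnu)
        nlinarith
      · have h1 : ‖u‖⁻¹ * ⟪u, (y : Ed)⟫ ≤ β / ‖u‖ := by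
          rw [div_eq_inv_mul]
          exact mul_le_mul_of_nonneg_left hy2 (by positivity)
        have h2 : (0:ℝ) ≤ β / ‖u‖ := div_nonneg hβ (le_of_lt hnu)
        nlinarith
    · simp only [if_neg hi]
      rw [happ, hrepr]
      have h1 : |⟪b i, (y : Ed)⟫| ≤ 1 := by
        have := abs_real_inner_le_norm (b i) (y : Ed)
        rw [hvn, b.orthonormal.1 i] at this
        simpa using this
      rw [abs_le] at h1
      constructor <;> nlinarith
  have hμT : volume T = ENNReal.ofReal (β / ‖u‖ - α / ‖u‖) * ENNReal.ofReal 2 ^ (d - 1) := by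
    have hpimeas : MeasurableSet (Set.pi Set.univ s) := MeasurableSet.univ_pi hmeas_s
    have h1 : volume T =
        volume (((MeasurableEquiv.toLp 2 (Fin d → ℝ)).symm) ⁻¹' (Set.pi Set.univ s)) :=
      b.measurePreserving_repr.measure_preimage
        ((((MeasurableEquiv.toLp 2 (Fin d → ℝ)).symm).measurable hpimeas).nullMeasurableSet)
    have h2 : volume (((MeasurableEquiv.toLp 2 (Fin d → ℝ)).symm) ⁻¹' (Set.pi Set.univ s)) =
        volume (Set.pi Set.univ s) :=
      (EuclideanSpace.volume_preserving_symm_measurableEquiv_toLp (Fin d)).measure_preimage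
        hpimeas.nullMeasurableSet
    rw [h1, h2, volume_pi_pi]
    rw [← Finset.mul_prod_erase Finset.univ _ (Finset.mem_univ i₀)]
    have h3 : ∀ i ∈ Finset.univ.erase i₀, volume (s i) = ENNReal.ofReal 2 := by
      intro i hi
      rw [hs]
      simp only [if_neg (Finset.mem_erase.mp hi).1]
      rw [Real.volume_Icc]; norm_num
    rw [Finset.prod_congr rfl h3, Finset.prod_const]
    have hcard : (Finset.univ.erase i₀).card = d - 1 := by
      rw [Finset.card_erase_of_mem (Finset.mem_univ i₀), Finset.card_univ, Fintype.card_fin]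
    rw [hcard, hs]
    simp only [eq_self_iff_true, if_true, if_pos]
    rw [Real.volume_Icc]
  calc (Module.finrank ℝ Ed : ℝ≥0∞) *
      volume (Set.Ioo (0:ℝ) 1 • (Subtype.val '' {y : sphere (0 : Ed) 1 | ⟪u, (y : Ed)⟫ ∈ Set.Icc α β}))
      ≤ (d : ℝ≥0∞) * volume T := by
        rw [finrank_euclideanSpace_fin]
        exact mul_le_mul_right (measure_mono hincl) _
    _ ≤ ENNReal.ofReal ((d : ℝ) * 2 ^ d * ((β - α) / ‖u‖)) := by
        rw [hμT]
        have h4 : β / ‖u‖ - α / ‖u‖ = (β - α) / ‖u‖ := by ring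
        have h6 : (0:ℝ) ≤ (β - α) / ‖u‖ := div_nonneg (by linarith) (le_of_lt hnu)
        have hA : (0:ℝ) ≤ β / ‖u‖ - α / ‖u‖ := by rw [h4]; exact h6
        have e1 : (d : ℝ≥0∞) = ENNReal.ofReal (d : ℝ) := by
          rw [ENNReal.ofReal_natCast]
        have e2 : (ENNReal.ofReal 2) ^ (d - 1) = ENNReal.ofReal (2 ^ (d-1) : ℝ) := by
          rw [ENNReal.ofReal_pow (by norm_num)]
        rw [e1, e2, ← ENNReal.ofReal_mul hA, ← ENNReal.ofReal_mul (by positivity)]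
        apply ENNReal.ofReal_le_ofReal
        rw [h4]
        have h5 : (2:ℝ) ^ (d-1) ≤ 2 ^ d := by
          apply pow_le_pow_right₀ (by norm_num) (Nat.sub_le d 1)
        have hd' : (0:ℝ) < d := by exact_mod_cast hd
        have h7 := mul_le_mul_of_nonneg_left
          (mul_le_mul_of_nonneg_right h5 h6) (le_of_lt hd')
        nlinarith [h7]
lemma exists_partition (δ : ℝ) (hδ : 0 < δ) :
    ∃ (N : ℕ) (yc : Fin N → sphere (0 : Ed) 1) (A : Fin N → Set (sphere (0 : Ed) 1)),
      (∀ k, MeasurableSet (A k)) ∧ (Pairwise (Function.onFun Disjoint A)) ∧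
      (⋃ k, A k) = Set.univ ∧ ∀ k, A k ⊆ ball (yc k) δ := by
  classical
  cases isEmpty_or_nonempty (sphere (0 : Ed) 1) with
  | inl h =>
    refine ⟨0, (fun k => k.elim0), (fun k => k.elim0), fun k => k.elim0, ?_, ?_, fun k => k.elim0⟩
    · intro j k _; exact j.elim0
    · rw [Set.iUnion_of_empty, Set.univ_eq_empty_iff.mpr h]
  | inr h =>
    obtain ⟨t, ht⟩ := isCompact_univ.elim_finite_subcover
      (fun y : sphere (0 : Ed) 1 => ball y δ) (fun _ => isOpen_ball)
      (fun y _ => Set.mem_iUnion.2 ⟨y, mem_ball_self hδ⟩)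
    set N := t.card with hN
    set e := t.equivFin with he
    set yc : Fin N → sphere (0 : Ed) 1 := fun k => (e.symm k : sphere (0 : Ed) 1) with hyc
    set A : Fin N → Set (sphere (0 : Ed) 1) :=
      fun k => ball (yc k) δ \ ⋃ (j : Fin N) (_ : j < k), ball (yc j) δ with hA
    have hcov : ∀ y : sphere (0 : Ed) 1, ∃ k, y ∈ ball (yc k) δ := by
      intro y
      have := ht (Set.mem_univ y)
      rw [Set.mem_iUnion₂] at this
      obtain ⟨y', hy't, hy'⟩ := this
      refine ⟨e ⟨y', hy't⟩, ?_⟩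
      show y ∈ ball ((e.symm (e ⟨y', hy't⟩)) : sphere (0 : Ed) 1) δ
      rwa [Equiv.symm_apply_apply]
    have hkey : ∀ j k : Fin N, j < k → Disjoint (A j) (A k) := by
      intro j k hjk
      rw [Set.disjoint_left]
      intro y hyj hyk
      exact hyk.2 (Set.mem_iUnion.2 ⟨j, Set.mem_iUnion.2 ⟨hjk, hyj.1⟩⟩)
    refine ⟨N, yc, A, ?_, ?_, ?_, ?_⟩
    · intro k
      exact isOpen_ball.measurableSet.diff
        (MeasurableSet.iUnion fun j => MeasurableSet.iUnion fun _ => isOpen_ball.measurableSet)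
    · intro j k hjk
      rcases hjk.lt_or_gt with h' | h'
      · exact hkey j k h'
      · exact (hkey k j h').symm
    · apply Set.eq_univ_of_forall
      intro y
      have hne : (Finset.univ.filter (fun k => y ∈ ball (yc k) δ)).Nonempty := by
        obtain ⟨k, hk⟩ := hcov y
        exact ⟨k, Finset.mem_filter.2 ⟨Finset.mem_univ k, hk⟩⟩
      set k₀ := (Finset.univ.filter (fun k => y ∈ ball (yc k) δ)).min' hne with hk₀
      have hk₀mem : y ∈ ball (yc k₀) δ :=
        (Finset.mem_filter.1 ((Finset.univ.filter _).min'_mem hne)).2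
      refine Set.mem_iUnion.2 ⟨k₀, hk₀mem, ?_⟩
      intro hy
      rw [Set.mem_iUnion] at hy
      obtain ⟨j, hj⟩ := hy
      rw [Set.mem_iUnion] at hj
      obtain ⟨hjk, hjball⟩ := hj
      have : k₀ ≤ j := Finset.min'_le _ _ (Finset.mem_filter.2 ⟨Finset.mem_univ j, hjball⟩)
      exact absurd hjk (not_lt.2 this)
    · intro k
      exact Set.diff_subset


instance : IsFiniteMeasure (sphereMeasure d) :=
  inferInstanceAs (IsFiniteMeasure (volume.toSphere))

lemma integrable_cont {f : sphere (0 : Ed) 1 → ℝ} (hf : Continuous f) :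
    Integrable f (sphereMeasure d) := by
  obtain ⟨C, hC⟩ := isCompact_univ.exists_bound_of_continuousOn hf.continuousOn
  exact (integrable_const C).mono' hf.aestronglyMeasurable
    (Filter.Eventually.of_forall fun y => hC y (Set.mem_univ y))

end MFAux


open MFAux
set_option maxHeartbeats 4000000

/-- **Integral combinations of max filters lie in the Lipschitz closure of their span.**
Let `G ≤ O(d)` be finite, `q : S^{d−1} → ℝ` Lipschitz, and `p : ℝ^d → ℝ` positively
homogeneous with `p(x) = ∫_{S^{d−1}} q(y)·max_{g∈G}⟨x, gy⟩ dω(y)` for unit vectors `x`.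
Then for every `ε > 0` there is a finite linear combination of max filters with unit-norm
templates within Lipschitz seminorm `< ε` of `p`. -/
theorem stmt_8 (d : ℕ)
    (G : Subgroup (EuclideanSpace ℝ (Fin d) ≃ₗᵢ[ℝ] EuclideanSpace ℝ (Fin d)))
    [Finite G]
    (q : sphere (0 : EuclideanSpace ℝ (Fin d)) 1 → ℝ)
    (hq : ∃ K, LipschitzWith K q)
    (p : EuclideanSpace ℝ (Fin d) → ℝ)
    (hhom : ∀ r : ℝ, 0 ≤ r → ∀ x, p (r • x) = r * p x)
    (hp : ∀ x : EuclideanSpace ℝ (Fin d), ‖x‖ = 1 →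
      p x = ∫ y, q y * maxFilter G (↑y : EuclideanSpace ℝ (Fin d)) x ∂(sphereMeasure d))
    (ε : ℝ) (hε : 0 < ε) :
    ∃ (N : ℕ) (y : Fin N → sphere (0 : EuclideanSpace ℝ (Fin d)) 1) (c : Fin N → ℝ)
      (K : ℝ), K < ε ∧
      ∀ x z : EuclideanSpace ℝ (Fin d),
        |(p x - ∑ k, c k * maxFilter G (↑(y k) : EuclideanSpace ℝ (Fin d)) x) -
          (p z - ∑ k, c k * maxFilter G (↑(y k) : EuclideanSpace ℝ (Fin d)) z)| ≤
        K * ‖x - z‖ := by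

  classical
  haveI : Fintype G := Fintype.ofFinite G
  haveI : Nonempty G := ⟨1⟩
  obtain ⟨Kq0, hqL⟩ := hq
  set ω := sphereMeasure d with hω
  set Kq : ℝ := (Kq0 : ℝ) with hKqdef
  have hKq0 : 0 ≤ Kq := Kq0.coe_nonneg
  have hqc : Continuous q := hqL.continuous
  obtain ⟨Q0, hQ0⟩ := isCompact_univ.exists_bound_of_continuousOn hqc.continuousOn
  set Q := max Q0 0 with hQdef
  have hQ : ∀ y, |q y| ≤ Q := fun y => le_trans (hQ0 y (Set.mem_univ y)) (le_max_left _ _)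
  have hQnn : 0 ≤ Q := le_max_right _ _
  set m := (ω Set.univ).toReal with hm
  have hm0 : 0 ≤ m := ENNReal.toReal_nonneg
  set Cd : ℝ := (d : ℝ) * 2 ^ d with hCd
  have hCd0 : 0 ≤ Cd := by positivity
  set nG : ℕ := Fintype.card G with hnG
  set Λ : ℝ := (Kq + Q) * m + Q * (nG * nG) * (12 * Cd + 3 * m) with hΛ
  have hΛ0 : 0 ≤ Λ := by positivity
  obtain ⟨r, hr0, hr1, hrK⟩ : ∃ r : ℝ, 0 < r ∧ r ≤ 1 ∧ Λ * r < ε := by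
    refine ⟨min 1 (ε / (2 * (Λ + 1))), lt_min one_pos (by positivity), min_le_left _ _, ?_⟩
    have h1 : min 1 (ε / (2 * (Λ + 1))) ≤ ε / (2 * (Λ + 1)) := min_le_right _ _
    have h2 : Λ * min 1 (ε / (2 * (Λ + 1))) ≤ Λ * (ε / (2 * (Λ + 1))) :=
      mul_le_mul_of_nonneg_left h1 hΛ0
    have h3 : Λ * (ε / (2 * (Λ + 1))) < ε := by
      rw [mul_div_assoc', div_lt_iff₀ (by positivity)]
      nlinarith
    linarith
  set δ := r * r with hδ
  have hδ0 : 0 < δ := by rw [hδ]; positivity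
  have hδr : δ ≤ r := by rw [hδ]; nlinarith
  have hδ1 : δ ≤ 1 := by rw [hδ]; nlinarith
  obtain ⟨N, yc, A, hAm, hAd, hAu, hAb⟩ := exists_partition (d := d) δ hδ0
  set c : Fin N → ℝ := fun k => q (yc k) * (ω (A k)).toReal with hc
  refine ⟨N, yc, c, Λ * r, ?_, ?_⟩
  · exact hrK
  · intro x z
    set s := ‖x - z‖ with hs
    have hs0 : 0 ≤ s := norm_nonneg _
    have hintx : ∀ w : EuclideanSpace ℝ (Fin d),
        Integrable (fun y : sphere (0 : EuclideanSpace ℝ (Fin d)) 1 =>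
          q y * maxFilter G ↑y w) ω :=
      fun w => integrable_cont (hqc.mul (continuous_maxFilter w))
    -- p agrees with the integral everywhere
    have hp0 : ∀ w : EuclideanSpace ℝ (Fin d),
        p w = ∫ y, q y * maxFilter G (↑y) w ∂ω := by
      intro w
      rcases eq_or_ne w 0 with rfl | hw
      · have h1 : p 0 = 0 := by
          have := hhom 0 le_rfl 0
          rwa [zero_smul, zero_mul] at this
        have h2 : ∀ y : sphere (0 : EuclideanSpace ℝ (Fin d)) 1,
            q y * maxFilter G (↑y) (0 : EuclideanSpace ℝ (Fin d)) = 0 := by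
          intro y
          have h3 : maxFilter G (↑y) (0 : EuclideanSpace ℝ (Fin d)) = 0 := by
            rw [maxFilter]
            simp only [inner_zero_left]
            exact ciSup_const
          rw [h3, mul_zero]
        rw [h1, integral_congr_ae (Filter.Eventually.of_forall h2), integral_zero]
      · set u := ‖w‖⁻¹ • w with hu
        have hu1 : ‖u‖ = 1 := norm_smul_inv_norm hw
        have hwu : w = ‖w‖ • u := by
          rw [hu, smul_smul, mul_inv_cancel₀ (norm_ne_zero_iff.2 hw), one_smul]
        have h1 : p w = ‖w‖ * p u := by
          conv_lhs => rw [hwu]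
          exact hhom ‖w‖ (norm_nonneg w) u
        rw [h1, hp u hu1, ← integral_const_mul]
        apply integral_congr_ae
        apply Filter.Eventually.of_forall
        intro y
        show ‖w‖ * (q y * maxFilter G ↑y u) = q y * maxFilter G ↑y w
        conv_rhs => rw [hwu]
        rw [maxFilter_smul _ _ (norm_nonneg w)]
        ring
    have hcover : (⋃ k ∈ Finset.univ, A k) =
        (Set.univ : Set (sphere (0 : EuclideanSpace ℝ (Fin d)) 1)) := by
      rw [← hAu]; ext yy; simp
    have hsplit : ∀ f : sphere (0 : EuclideanSpace ℝ (Fin d)) 1 → ℝ, Integrable f ω →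
        ∫ y, f y ∂ω = ∑ k, ∫ y in A k, f y ∂ω := by
      intro f hf
      rw [← setIntegral_univ (μ := ω) (f := f), ← hcover,
        integral_biUnion_finset Finset.univ (fun k _ => hAm k)
          (fun k _ j _ hkj => hAd hkj) (fun k _ => hf.integrableOn)]
    have hdecomp : ∀ w : EuclideanSpace ℝ (Fin d),
        p w - ∑ k, c k * maxFilter G ↑(yc k) w
        = ∑ k, ∫ y in A k,
            (q y * maxFilter G ↑y w - q (yc k) * maxFilter G ↑(yc k) w) ∂ω := by
      intro w
      have h2 : ∀ k, c k * maxFilter G ↑(yc k) w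
          = ∫ _y in A k, (q (yc k) * maxFilter G ↑(yc k) w) ∂ω := by
        intro k
        rw [setIntegral_const, smul_eq_mul, hc, measureReal_def]
        ring
      rw [hp0 w, hsplit _ (hintx w), ← Finset.sum_sub_distrib]
      apply Finset.sum_congr rfl
      intro k _
      rw [h2 k, ← integral_sub ((hintx w).integrableOn)
        integrableOn_const]
    -- the basic objects of the estimate
    set F : sphere (0 : EuclideanSpace ℝ (Fin d)) 1 → ℝ :=
      fun y => maxFilter G ↑y x - maxFilter G ↑y z with hF
    have hFs : ∀ y, |F y| ≤ s := by
      intro y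
      have h := abs_maxFilter_sub (G := G) (↑y) x z
      rw [norm_coe_sphere y, mul_one] at h
      simpa only [hF, hs] using h
    have hFcont : Continuous F := by
      rw [hF]; exact (continuous_maxFilter x).sub (continuous_maxFilter z)
    set Wf : G × G → ℝ := fun ab => ‖va ab.1 x - va ab.2 x‖ with hWf
    set Wf' : G × G → ℝ := fun ab => ‖va ab.1 z - va ab.2 z‖ with hWf'
    have hWf0 : ∀ ab, 0 ≤ Wf ab := fun ab => norm_nonneg _
    have hWf'0 : ∀ ab, 0 ≤ Wf' ab := fun ab => norm_nonneg _
    set Ee : G × G → Set (sphere (0 : EuclideanSpace ℝ (Fin d)) 1) := fun ab =>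
      {y | ⟪va ab.1 x - va ab.2 x, (y : EuclideanSpace ℝ (Fin d))⟫ ∈
        Set.Icc (-(δ * Wf ab)) (δ * Wf' ab + 2 * s)} with hEe
    have hEmeas : ∀ ab, MeasurableSet (Ee ab) := fun ab =>
      (Continuous.inner continuous_const continuous_subtype_val).measurable measurableSet_Icc
    set cp : G × G → ℝ := fun ab => min (2 * s) (δ * Wf' ab) with hcp
    have hcp0 : ∀ ab, 0 ≤ cp ab := fun ab =>
      le_min (by positivity) (mul_nonneg hδ0.le (hWf'0 ab))
    set B : sphere (0 : EuclideanSpace ℝ (Fin d)) 1 → ℝ := fun y =>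
      Kq * δ * s + Q * (s * δ + ∑ ab : G × G, (Ee ab).indicator (fun _ => cp ab) y) with hB
    -- master pointwise bound
    have hmaster : ∀ k, ∀ y ∈ A k,
        |q y * F y - q (yc k) * F (yc k)| ≤ B y := by
      intro k y hyk
      have hdk : dist y (yc k) ≤ δ := le_of_lt (mem_ball.1 (hAb k hyk))
      obtain ⟨a, b, habs, hc1, hc2⟩ := core2 (G := G) x z (le_of_lt hδ0) y (yc k) hdk
      have habs' : |F y - F (yc k)| ≤ s * δ + δ * Wf' (a, b) := by
        simp only [hF, hWf', hs]
        exact habs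
      have hyE : y ∈ Ee (a, b) := by
        simp only [hEe, hWf, hWf', hs, Set.mem_setOf_eq, Set.mem_Icc]
        exact ⟨hc1, hc2⟩
      have hFd2s : |F y - F (yc k)| ≤ 2 * s := by
        have h1 := hFs y
        have h2 := hFs (yc k)
        have h3 := abs_sub (F y) (F (yc k))
        linarith
      have hFd : |F y - F (yc k)| ≤ s * δ + cp (a, b) := by
        rcases min_cases (2 * s) (δ * Wf' (a, b)) with ⟨he, _⟩ | ⟨he, _⟩ <;>
          simp only [hcp] <;> rw [he]
        · nlinarith [hδ0.le, hs0]
        · linarith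
      have hsum : cp (a, b) ≤ ∑ ab : G × G, (Ee ab).indicator (fun _ => cp ab) y := by
        have h1 : (Ee (a, b)).indicator (fun _ => cp (a, b)) y = cp (a, b) :=
          Set.indicator_of_mem hyE _
        rw [← h1]
        exact Finset.single_le_sum
          (f := fun ab => (Ee ab).indicator (fun _ => cp ab) y)
          (fun ab _ => Set.indicator_nonneg (fun _ _ => hcp0 ab) y) (Finset.mem_univ (a, b))
      have hq1 : |q y - q (yc k)| ≤ Kq * δ := by
        have h1 := hqL.dist_le_mul y (yc k)
        rw [Real.dist_eq] at h1
        calc |q y - q (yc k)| ≤ Kq * dist y (yc k) := h1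
          _ ≤ Kq * δ := mul_le_mul_of_nonneg_left hdk hKq0
      have key : q y * F y - q (yc k) * F (yc k)
          = (q y - q (yc k)) * F y + q (yc k) * (F y - F (yc k)) := by ring
      calc |q y * F y - q (yc k) * F (yc k)|
          ≤ |(q y - q (yc k)) * F y| + |q (yc k) * (F y - F (yc k))| := by
            rw [key]; exact abs_add_le _ _
        _ = |q y - q (yc k)| * |F y| + |q (yc k)| * |F y - F (yc k)| := by
            rw [abs_mul, abs_mul]
        _ ≤ B y := by
            have t1 : |q y - q (yc k)| * |F y| ≤ (Kq * δ) * s :=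
              mul_le_mul hq1 (hFs y) (abs_nonneg _) (by positivity)
            have t2 : |q (yc k)| * |F y - F (yc k)| ≤ Q * (s * δ + cp (a, b)) :=
              mul_le_mul (hQ _) hFd (abs_nonneg _) hQnn
            have t3 : Q * (s * δ + cp (a, b)) ≤
                Q * (s * δ + ∑ ab : G × G, (Ee ab).indicator (fun _ => cp ab) y) :=
              mul_le_mul_of_nonneg_left (by linarith) hQnn
            simp only [hB]
            nlinarith [t1, t2, t3]
    -- integrability
    have hindint : ∀ ab : G × G,
        Integrable ((Ee ab).indicator (fun _ => cp ab)) ω := fun ab =>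
      (integrable_indicator_iff (hEmeas ab)).2
        integrableOn_const
    have hsumint : Integrable
        (fun y => ∑ ab : G × G, (Ee ab).indicator (fun _ => cp ab) y) ω :=
      integrable_finset_sum _ (fun ab _ => hindint ab)
    have hBint : Integrable B ω := by
      rw [hB]
      exact (integrable_const _).add (((integrable_const _).add hsumint).const_mul Q)
    have hGkint : ∀ k, Integrable (fun y => q y * F y - q (yc k) * F (yc k)) ω := fun k =>
      integrable_cont ((hqc.mul hFcont).sub continuous_const)
    -- main chain
    have hmain : |(p x - ∑ k, c k * maxFilter G ↑(yc k) x) -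
        (p z - ∑ k, c k * maxFilter G ↑(yc k) z)| ≤ ∫ y, B y ∂ω := by
      rw [hdecomp x, hdecomp z, ← Finset.sum_sub_distrib]
      have step1 : ∀ k : Fin N,
          (∫ y in A k,
            (q y * maxFilter G ↑y x - q (yc k) * maxFilter G ↑(yc k) x) ∂ω)
          - (∫ y in A k,
            (q y * maxFilter G ↑y z - q (yc k) * maxFilter G ↑(yc k) z) ∂ω)
          = ∫ y in A k, (q y * F y - q (yc k) * F (yc k)) ∂ω := by
        intro k
        rw [← integral_sub
          (f := fun y => q y * maxFilter G ↑y x - q (yc k) * maxFilter G ↑(yc k) x)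
          (g := fun y => q y * maxFilter G ↑y z - q (yc k) * maxFilter G ↑(yc k) z)
          ((integrable_cont ((hqc.mul (continuous_maxFilter x)).sub continuous_const)).integrableOn)
          ((integrable_cont ((hqc.mul (continuous_maxFilter z)).sub continuous_const)).integrableOn)]
        · apply integral_congr_ae
          apply Filter.Eventually.of_forall
          intro y
          simp only [hF]
          ring
      have step2 : (∑ k : Fin N, ((∫ y in A k,
            (q y * maxFilter G ↑y x - q (yc k) * maxFilter G ↑(yc k) x) ∂ω)
          - (∫ y in A k,
            (q y * maxFilter G ↑y z - q (yc k) * maxFilter G ↑(yc k) z) ∂ω)))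
          = ∑ k : Fin N, ∫ y in A k, (q y * F y - q (yc k) * F (yc k)) ∂ω :=
        Finset.sum_congr rfl fun k _ => step1 k
      rw [step2]
      calc |∑ k : Fin N, ∫ y in A k, (q y * F y - q (yc k) * F (yc k)) ∂ω|
          ≤ ∑ k : Fin N, |∫ y in A k, (q y * F y - q (yc k) * F (yc k)) ∂ω| :=
            Finset.abs_sum_le_sum_abs _ _
        _ ≤ ∑ k : Fin N, ∫ y in A k, B y ∂ω := by
            apply Finset.sum_le_sum
            intro k _
            calc |∫ y in A k, (q y * F y - q (yc k) * F (yc k)) ∂ω|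
                ≤ ∫ y in A k, |q y * F y - q (yc k) * F (yc k)| ∂ω := by
                  have h := norm_integral_le_integral_norm
                    (μ := ω.restrict (A k)) (f := fun y => q y * F y - q (yc k) * F (yc k))
                  simpa only [Real.norm_eq_abs] using h
              _ ≤ ∫ y in A k, B y ∂ω :=
                  setIntegral_mono_on ((hGkint k).abs.integrableOn)
                    hBint.integrableOn (hAm k) (hmaster k)
        _ = ∫ y, B y ∂ω := (hsplit B hBint).symm
    -- computing the integral of B
    have hIind : ∀ ab : G × G, ∫ y, (Ee ab).indicator (fun _ => cp ab) y ∂ω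
        = (ω (Ee ab)).toReal * cp ab := by
      intro ab
      rw [integral_indicator_const _ (hEmeas ab), smul_eq_mul, measureReal_def]
    have hintB : ∫ y, B y ∂ω
        = (Kq * δ * s) * m
          + Q * ((s * δ) * m + ∑ ab : G × G, (ω (Ee ab)).toReal * cp ab) := by
      have e1 : ∫ y, B y ∂ω
          = ∫ y, (Kq * δ * s
              + Q * (s * δ + ∑ ab : G × G, (Ee ab).indicator (fun _ => cp ab) y)) ∂ω := by
        rw [hB]
      rw [e1, integral_add (f := fun _ => Kq * δ * s)
          (g := fun y => Q * (s * δ + ∑ ab : G × G, (Ee ab).indicator (fun _ => cp ab) y))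
          (integrable_const _) (((integrable_const _).add hsumint).const_mul Q),
        integral_const,
        integral_const_mul,
        integral_add (f := fun _ => s * δ)
          (g := fun y => ∑ ab : G × G, (Ee ab).indicator (fun _ => cp ab) y)
          (integrable_const _) hsumint,
        integral_const,
        integral_finset_sum _ (fun ab _ => hindint ab)]
      simp only [smul_eq_mul, measureReal_def]
      rw [Finset.sum_congr rfl fun ab _ => hIind ab, ← hm]
      ring
    -- per-pair bound
    have hW'W : ∀ ab : G × G, Wf' ab ≤ Wf ab + 2 * s := by
      intro ab
      obtain ⟨a, b⟩ := ab
      have e : va a z - va b z = (va a x - va b x) - (va a (x - z) - va b (x - z)) := by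
        rw [← va_sub, ← va_sub]
        abel
      simp only [hWf, hWf', hs]
      calc ‖va a z - va b z‖
          = ‖(va a x - va b x) - (va a (x - z) - va b (x - z))‖ := by rw [e]
        _ ≤ ‖va a x - va b x‖ + ‖va a (x - z) - va b (x - z)‖ := norm_sub_le _ _
        _ ≤ ‖va a x - va b x‖ + (‖va a (x - z)‖ + ‖va b (x - z)‖) := by
            linarith [norm_sub_le (va a (x - z)) (va b (x - z))]
        _ = ‖va a x - va b x‖ + 2 * ‖x - z‖ := by
            rw [va_norm, va_norm]; ring
    have hpair : ∀ ab : G × G,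
        (ω (Ee ab)).toReal * cp ab ≤ (12 * Cd + 3 * m) * (s * r) := by
      intro ab
      have hEtop : (ω (Ee ab)).toReal ≤ m := by
        rw [hm]
        exact ENNReal.toReal_mono (measure_ne_top ω _) (measure_mono (Set.subset_univ _))
      rcases le_or_gt (r * Wf ab) s with hcase | hcase
      · have h1 : cp ab ≤ δ * Wf' ab := by rw [hcp]; exact min_le_right _ _
        have h2 : δ * Wf' ab ≤ 3 * (s * r) := by
          have a1 : δ * Wf' ab ≤ δ * (Wf ab + 2 * s) :=
            mul_le_mul_of_nonneg_left (hW'W ab) hδ0.le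
          have a2 : δ * Wf ab ≤ r * (r * Wf ab) := by
            rw [hδ]; nlinarith [hWf0 ab]
          have a3 : r * (r * Wf ab) ≤ r * s := mul_le_mul_of_nonneg_left hcase hr0.le
          have a4 : δ * s ≤ r * s := mul_le_mul_of_nonneg_right hδr hs0
          nlinarith
        calc (ω (Ee ab)).toReal * cp ab ≤ m * (3 * (s * r)) :=
              mul_le_mul hEtop (h1.trans h2) (hcp0 ab) hm0
          _ ≤ (12 * Cd + 3 * m) * (s * r) := by
              nlinarith [mul_nonneg hCd0 (mul_nonneg hs0 hr0.le)]
      · have hWpos : 0 < Wf ab := by nlinarith [hr0, hs0, hr1]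
        have hWfab : ‖va ab.1 x - va ab.2 x‖ = Wf ab := by rw [hWf]
        have hune : va ab.1 x - va ab.2 x ≠ 0 := by
          have h0 : (0:ℝ) < ‖va ab.1 x - va ab.2 x‖ := by rw [hWfab]; exact hWpos
          exact norm_pos_iff.1 h0
        have hnum0 : (0:ℝ) ≤ δ * Wf' ab + 2 * s + δ * Wf ab :=
          add_nonneg (add_nonneg (mul_nonneg hδ0.le (hWf'0 ab))
            (mul_nonneg (by norm_num) hs0)) (mul_nonneg hδ0.le (hWf0 ab))
        have hslab := slab_measure (d := d) (va ab.1 x - va ab.2 x) hune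
          (α := -(δ * Wf ab)) (β := δ * Wf' ab + 2 * s)
          (neg_nonpos.2 (mul_nonneg hδ0.le (hWf0 ab)))
          (add_nonneg (mul_nonneg hδ0.le (hWf'0 ab)) (mul_nonneg (by norm_num) hs0))
        rw [hWfab] at hslab
        have hEle : (ω (Ee ab)).toReal
            ≤ Cd * ((δ * Wf' ab + 2 * s + δ * Wf ab) / Wf ab) := by
          apply ENNReal.toReal_le_of_le_ofReal
            (mul_nonneg hCd0 (div_nonneg hnum0 (hWf0 ab)))
          have e2 : Cd * ((δ * Wf' ab + 2 * s + δ * Wf ab) / Wf ab)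
              = (d : ℝ) * 2 ^ d * ((δ * Wf' ab + 2 * s - -(δ * Wf ab)) / Wf ab) := by
            rw [hCd]; ring_nf
          rw [hω, e2]
          simp only [hEe]
          exact hslab
        have h6r : (δ * Wf' ab + 2 * s + δ * Wf ab) / Wf ab ≤ 6 * r := by
          rw [div_le_iff₀ hWpos]
          have a1 : δ * Wf' ab ≤ δ * Wf ab + 2 * (δ * s) := by
            nlinarith [mul_le_mul_of_nonneg_left (hW'W ab) hδ0.le]
          have a2 : δ * Wf ab ≤ r * Wf ab := mul_le_mul_of_nonneg_right hδr (hWf0 ab)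
          have a3 : δ * s ≤ s := by nlinarith [hs0, hδ1, hδ0.le]
          have a4 : s ≤ r * Wf ab := hcase.le
          linarith
        calc (ω (Ee ab)).toReal * cp ab
            ≤ (Cd * ((δ * Wf' ab + 2 * s + δ * Wf ab) / Wf ab)) * (2 * s) :=
              mul_le_mul hEle (by rw [hcp]; exact min_le_left _ _) (hcp0 ab)
                (mul_nonneg hCd0 (div_nonneg hnum0 (hWf0 ab)))
          _ ≤ (Cd * (6 * r)) * (2 * s) :=
              mul_le_mul_of_nonneg_right (mul_le_mul_of_nonneg_left h6r hCd0) (by positivity)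
          _ = 12 * Cd * (s * r) := by ring
          _ ≤ (12 * Cd + 3 * m) * (s * r) := by
              nlinarith [mul_nonneg hm0 (mul_nonneg hs0 hr0.le)]
    have hsum_le : ∑ ab : G × G, (ω (Ee ab)).toReal * cp ab
        ≤ (nG * nG : ℝ) * ((12 * Cd + 3 * m) * (s * r)) := by
      calc ∑ ab : G × G, (ω (Ee ab)).toReal * cp ab
          ≤ (Finset.univ : Finset (G × G)).card • ((12 * Cd + 3 * m) * (s * r)) :=
            Finset.sum_le_card_nsmul _ _ _ (fun ab _ => hpair ab)
        _ = (nG * nG : ℝ) * ((12 * Cd + 3 * m) * (s * r)) := by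
            rw [Finset.card_univ, Fintype.card_prod, nsmul_eq_mul, hnG]
            push_cast
            ring
    -- conclusion
    have hfin : ∫ y, B y ∂ω ≤ Λ * r * s := by
      rw [hintB, hΛ]
      have b1 : δ * s ≤ r * s := mul_le_mul_of_nonneg_right hδr hs0
      have b2 : (Kq * δ * s) * m ≤ Kq * (r * s) * m := by
        nlinarith [mul_le_mul_of_nonneg_right (mul_le_mul_of_nonneg_left b1 hKq0) hm0]
      have b3 : (s * δ) * m ≤ (r * s) * m := by
        nlinarith [mul_le_mul_of_nonneg_right b1 hm0]
      have b4 : Q * ((s * δ) * m + ∑ ab : G × G, (ω (Ee ab)).toReal * cp ab)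
          ≤ Q * ((r * s) * m + (nG * nG : ℝ) * ((12 * Cd + 3 * m) * (s * r))) := by
        apply mul_le_mul_of_nonneg_left _ hQnn
        linarith [hsum_le]
      nlinarith [b2, b4]
    calc |(p x - ∑ k, c k * maxFilter G ↑(yc k) x) -
        (p z - ∑ k, c k * maxFilter G ↑(yc k) z)| ≤ ∫ y, B y ∂ω := hmain
      _ ≤ Λ * r * s := hfin
      _ = Λ * r * ‖x - z‖ := by rw [hs]
end
end

section
/- Let U ⊆ ℝ^d be open, and let f, f₁, f₂, … : ℝ^d → ℝ be Lipschitz functions with f(0) = f_n(0) = 0 for all n, such that each f_n is continuously differentiable on U and β(f_n − f) → 0 as n → ∞. Then f is continuously differentiable on U. -/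
noncomputable section

/-- If Lipschitz functions `fₙ : ℝ^d → ℝ` vanishing at `0` are continuously differentiable
on an open set `U` and converge in Lipschitz seminorm (`β(fₙ − f) → 0`, witnessed by
Lipschitz bounds `K n → 0` for `fₙ − f`) to a Lipschitz function `f` vanishing at `0`,
then `f` is continuously differentiable on `U`. -/
theorem stmt_11 {d : ℕ} (U : Set (EuclideanSpace ℝ (Fin d))) (hU : IsOpen U)
    (f : EuclideanSpace ℝ (Fin d) → ℝ) (fs : ℕ → EuclideanSpace ℝ (Fin d) → ℝ)
    (hf0 : f 0 = 0) (hfs0 : ∀ n, fs n 0 = 0)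
    (hf : ∃ K, LipschitzWith K f) (hfs : ∀ n, ∃ K, LipschitzWith K (fs n))
    (hC1 : ∀ n, ContDiffOn ℝ 1 (fs n) U)
    (K : ℕ → ℝ)
    (hK : ∀ (n : ℕ) (x y : EuclideanSpace ℝ (Fin d)),
      |(fs n x - f x) - (fs n y - f y)| ≤ K n * ‖x - y‖)
    (hK0 : Filter.Tendsto K Filter.atTop (nhds 0)) :
    ContDiffOn ℝ 1 f U := by
  classical
  set F : ℕ → EuclideanSpace ℝ (Fin d) → EuclideanSpace ℝ (Fin d) →L[ℝ] ℝ :=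
    fun n => fderiv ℝ (fs n) with hF
  -- each fs n has derivative F n on U
  have hdiffAt : ∀ n, ∀ x ∈ U, DifferentiableAt ℝ (fs n) x := fun n x hx =>
    ((hC1 n).differentiableOn one_ne_zero).differentiableAt (hU.mem_nhds hx)
  have h1 : ∀ n, ∀ x ∈ U, HasFDerivAt (fs n) (F n x) x := fun n x hx =>
    (hdiffAt n x hx).hasFDerivAt
  -- key estimate on differences of derivatives
  have hKK : ∀ n, |K n| ≤ |K n| := fun _ => le_rfl
  have hdiff : ∀ n m, ∀ x ∈ U, ‖F n x - F m x‖ ≤ |K n| + |K m| := by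
    intro n m x hx
    have hd : HasFDerivAt (fun y => fs n y - fs m y) (F n x - F m x) x :=
      (h1 n x hx).sub (h1 m x hx)
    refine hd.le_of_lip' (by positivity) ?_
    filter_upwards [Filter.univ_mem] with y _
    have h1' := hK n y x
    have h2' := hK m y x
    have : ‖(fs n y - fs m y) - (fs n x - fs m x)‖
        ≤ |(fs n y - f y) - (fs n x - f x)| + |(fs m y - f y) - (fs m x - f x)| := by
      rw [Real.norm_eq_abs]
      have : (fs n y - fs m y) - (fs n x - fs m x)
          = ((fs n y - f y) - (fs n x - f x)) - ((fs m y - f y) - (fs m x - f x)) := by ring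
      rw [this]
      exact abs_sub _ _
    refine this.trans ?_
    have hnorm : (0:ℝ) ≤ ‖y - x‖ := norm_nonneg _
    have hn' : |(fs n y - f y) - (fs n x - f x)| ≤ |K n| * ‖y - x‖ :=
      h1'.trans (by nlinarith [le_abs_self (K n)])
    have hm' : |(fs m y - f y) - (fs m x - f x)| ≤ |K m| * ‖y - x‖ :=
      h2'.trans (by nlinarith [le_abs_self (K m)])
    nlinarith
  -- |K n| tends to 0
  have hKabs : Filter.Tendsto (fun n => |K n|) Filter.atTop (nhds 0) := by
    simpa using hK0.abs
  -- uniform Cauchy sequence of derivatives on U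
  have hUC : UniformCauchySeqOn F Filter.atTop U := by
    rw [Metric.uniformCauchySeqOn_iff]
    intro ε hε
    obtain ⟨N, hN⟩ := (Metric.tendsto_atTop.mp hKabs) (ε / 2) (by linarith)
    refine ⟨N, fun m hm n hn x hx => ?_⟩
    have hm' : |K m| < ε / 2 := by
      have := hN m hm; rwa [Real.dist_eq, sub_zero, abs_abs] at this
    have hn' : |K n| < ε / 2 := by
      have := hN n hn; rwa [Real.dist_eq, sub_zero, abs_abs] at this
    have := hdiff m n x hx
    rw [dist_eq_norm]
    linarith
  -- pointwise limits of derivatives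
  have hptCauchy : ∀ x ∈ U, ∃ L, Filter.Tendsto (fun n => F n x) Filter.atTop (nhds L) := by
    intro x hx
    apply cauchySeq_tendsto_of_complete
    rw [Metric.cauchySeq_iff]
    intro ε hε
    obtain ⟨N, hN⟩ := (Metric.tendsto_atTop.mp hKabs) (ε / 2) (by linarith)
    refine ⟨N, fun m hm n hn => ?_⟩
    have hm' : |K m| < ε / 2 := by
      have := hN m hm; rwa [Real.dist_eq, sub_zero, abs_abs] at this
    have hn' : |K n| < ε / 2 := by
      have := hN n hn; rwa [Real.dist_eq, sub_zero, abs_abs] at this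
    have := hdiff m n x hx
    rw [dist_eq_norm]
    linarith
  set g' : EuclideanSpace ℝ (Fin d) → EuclideanSpace ℝ (Fin d) →L[ℝ] ℝ :=
    fun x => if h : ∃ L, Filter.Tendsto (fun n => F n x) Filter.atTop (nhds L)
      then h.choose else 0 with hg'
  have hgpt : ∀ x ∈ U, Filter.Tendsto (fun n => F n x) Filter.atTop (nhds (g' x)) := by
    intro x hx
    have h := hptCauchy x hx
    simp only [hg', dif_pos h]
    exact h.choose_spec
  -- uniform convergence of derivatives on U
  have hTU : TendstoUniformlyOn F g' Filter.atTop U :=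
    hUC.tendstoUniformlyOn_of_tendsto hgpt
  -- pointwise convergence fs n → f
  have hfg : ∀ x, Filter.Tendsto (fun n => fs n x) Filter.atTop (nhds (f x)) := by
    intro x
    rw [tendsto_iff_norm_sub_tendsto_zero]
    have hb : ∀ n, ‖fs n x - f x‖ ≤ |K n| * ‖x‖ := by
      intro n
      have := hK n x 0
      simp only [hfs0, hf0, sub_zero] at this
      rw [Real.norm_eq_abs]
      refine this.trans ?_
      have : (0:ℝ) ≤ ‖x‖ := norm_nonneg _
      nlinarith [le_abs_self (K n)]
    have hlim : Filter.Tendsto (fun n => |K n| * ‖x‖) Filter.atTop (nhds 0) := by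
      simpa using hKabs.mul_const ‖x‖
    exact squeeze_zero (fun n => norm_nonneg _) hb hlim
  -- f has derivative g' on U
  have hder : ∀ x ∈ U, HasFDerivAt f (g' x) x := fun x hx =>
    hasFDerivAt_of_tendstoLocallyUniformlyOn hU hTU.tendstoLocallyUniformlyOn h1
      (fun y _ => hfg y) hx
  -- g' is continuous on U
  have hFcont : ∀ n, ContinuousOn (F n) U := by
    intro n
    have := (contDiffOn_succ_iff_fderiv_of_isOpen (n := 0) hU).mp (hC1 n)
    simpa [contDiffOn_zero] using this.2.2
  have hgcont : ContinuousOn g' U :=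
    hTU.continuousOn (Filter.Eventually.of_forall hFcont).frequently
  -- conclude
  have : ContDiffOn ℝ (0 + 1) f U := by
    rw [contDiffOn_succ_iff_fderiv_of_isOpen hU]
    refine ⟨fun x hx => (hder x hx).differentiableAt.differentiableWithinAt, by simp, ?_⟩
    rw [contDiffOn_zero]
    exact ContinuousOn.congr hgcont fun x hx => (hder x hx).fderiv
  exact_mod_cast this
end
end

section
/- Let d ≥ 2, let y₁, …, y_N ∈ ℝ^d be nonzero vectors that are pairwise linearly independent (no y_i is a scalar multiple of y_j for i ≠ j), let c₁, …, c_N be nonzero real numbers, and define f : ℝ^d → ℝ by f(x) = Σ_{i=1}^N c_i |⟨x, y_i⟩|. Then f is (Fréchet) differentiable at x ∈ ℝ^d if and only if x does not lie in the union ⋃_{i=1}^N {y_i}^⊥ of the orthogonal-complement hyperplanes; equivalently, the set of points of non-differentiability of f equals ⋃_{i=1}^N {y_i}^⊥. -/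
noncomputable section

open scoped RealInnerProductSpace

/-- `t ↦ k * |t|` is not differentiable at `0` when `k ≠ 0`. -/
lemma aux_not_diff_const_mul_abs {k : ℝ} (hk : k ≠ 0) :
    ¬ DifferentiableAt ℝ (fun t : ℝ => k * |t|) 0 := by
  intro h
  have h2 := h.const_mul k⁻¹
  have : (fun t : ℝ => k⁻¹ * (k * |t|)) = fun t : ℝ => |t| := by
    funext t
    rw [← mul_assoc, inv_mul_cancel₀ hk, one_mul]
  rw [this] at h2
  exact not_differentiableAt_abs_zero h2

/-- A single max-filter term is differentiable off the hyperplane. -/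
lemma aux_term_diff {d : ℕ} (c : ℝ) (y p : EuclideanSpace ℝ (Fin d))
    (h : ⟪p, y⟫ ≠ 0) :
    DifferentiableAt ℝ (fun x : EuclideanSpace ℝ (Fin d) => c * |⟪x, y⟫|) p := by
  have hlin : DifferentiableAt ℝ (fun x : EuclideanSpace ℝ (Fin d) => ⟪x, y⟫) p := by
    have := (innerSL ℝ y).differentiableAt (x := p)
    refine this.congr_of_eventuallyEq ?_
    filter_upwards with z
    simp [real_inner_comm z y]
  exact ((differentiableAt_abs h).comp p hlin).const_mul c

/-- A single max-filter term is not differentiable on the hyperplane. -/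
lemma aux_term_not_diff {d : ℕ} {c : ℝ} {y p : EuclideanSpace ℝ (Fin d)}
    (hc : c ≠ 0) (hy : y ≠ 0) (hp : ⟪p, y⟫ = 0) :
    ¬ DifferentiableAt ℝ (fun x : EuclideanSpace ℝ (Fin d) => c * |⟪x, y⟫|) p := by
  intro h
  have hline : DifferentiableAt ℝ (fun t : ℝ => p + t • y) 0 :=
    (differentiableAt_id.smul_const y).const_add p
  have h' : DifferentiableAt ℝ (fun x : EuclideanSpace ℝ (Fin d) => c * |⟪x, y⟫|)
      ((fun t : ℝ => p + t • y) 0) := by simpa using h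
  have hcomp := h'.comp 0 hline
  have heq : (fun t : ℝ => c * |⟪p + t • y, y⟫|) = fun t : ℝ => (c * ⟪y, y⟫) * |t| := by
    funext t
    rw [inner_add_left, hp, zero_add, real_inner_smul_left, abs_mul,
      abs_of_nonneg (real_inner_self_nonneg (x := y))]
    ring
  simp only [Function.comp_def] at hcomp
  rw [heq] at hcomp
  have hk : c * ⟪y, y⟫ ≠ 0 := mul_ne_zero hc ((inner_self_ne_zero (𝕜 := ℝ)).mpr hy)
  exact aux_not_diff_const_mul_abs hk hcomp

/-- Finitely many nonzero linear functionals admit a common non-vanishing point. -/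
lemma aux_exists_forall_ne_zero {ι : Type*} {E : Type*} [AddCommGroup E] [Module ℝ E]
    (s : Finset ι) (f : ι → E →ₗ[ℝ] ℝ) (hf : ∀ i ∈ s, f i ≠ 0) :
    ∃ v : E, ∀ i ∈ s, f i v ≠ 0 := by
  classical
  induction s using Finset.induction_on with
  | empty => exact ⟨0, by simp⟩
  | @insert a s ha ih =>
    obtain ⟨v, hv⟩ := ih fun i hi => hf i (Finset.mem_insert_of_mem hi)
    by_cases hav : f a v ≠ 0
    · refine ⟨v, fun i hi => ?_⟩
      rcases Finset.mem_insert.mp hi with rfl | hi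
      · exact hav
      · exact hv i hi
    · push_neg at hav
      obtain ⟨w, hw⟩ := DFunLike.ne_iff.mp (hf a (Finset.mem_insert_self a s))
      simp only [LinearMap.zero_apply] at hw
      obtain ⟨t, ht⟩ := Infinite.exists_notMem_finset
        ((insert a s).image fun i => - (f i v) / (f i w))
      refine ⟨v + t • w, fun i hi h0 => ?_⟩
      simp only [map_add, map_smul, smul_eq_mul] at h0
      by_cases hiw : f i w = 0
      · rw [hiw, mul_zero, add_zero] at h0
        rcases Finset.mem_insert.mp hi with rfl | hi
        · exact hw hiw
        · exact hv i hi h0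
      · apply ht
        refine Finset.mem_image.mpr ⟨i, hi, ?_⟩
        field_simp
        linarith [h0]

/-- Let `y₁, …, y_N ∈ ℝ^d` (`d ≥ 2`) be nonzero and pairwise linearly independent, and let
`c₁, …, c_N` be nonzero reals.  Then `f(x) = Σᵢ cᵢ|⟨x, yᵢ⟩|` is differentiable at `x`
if and only if `x` avoids every hyperplane `{yᵢ}^⊥`, i.e. the set of points of
non-differentiability of `f` is exactly `⋃ᵢ {yᵢ}^⊥`. -/
theorem stmt_12 (d : ℕ) (hd : 2 ≤ d) (N : ℕ)
    (y : Fin N → EuclideanSpace ℝ (Fin d)) (c : Fin N → ℝ)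
    (hy0 : ∀ i, y i ≠ 0)
    (hyind : ∀ i j : Fin N, i ≠ j → ∀ t : ℝ, y i ≠ t • y j)
    (hc : ∀ i, c i ≠ 0) (x : EuclideanSpace ℝ (Fin d)) :
    DifferentiableAt ℝ (fun x' : EuclideanSpace ℝ (Fin d) => ∑ i, c i * |⟪x', y i⟫|) x ↔
      ∀ i, ⟪x, y i⟫ ≠ 0 := by
  classical
  constructor
  · intro hdiff
    by_contra hcon
    push_neg at hcon
    obtain ⟨j, hj⟩ := hcon
    set S : Finset (Fin N) := Finset.univ.filter (fun i => ⟪x, y i⟫ = 0) with hS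
    have hjS : j ∈ S := Finset.mem_filter.mpr ⟨Finset.mem_univ j, hj⟩
    -- the sum over indices off their hyperplanes is differentiable at x
    have hg2 : DifferentiableAt ℝ
        (fun x' : EuclideanSpace ℝ (Fin d) => ∑ i ∈ Finset.univ.filter (fun i => ¬ ⟪x, y i⟫ = 0),
          c i * |⟪x', y i⟫|) x := by
      refine DifferentiableAt.fun_sum fun i hi => ?_
      exact aux_term_diff _ _ _ (Finset.mem_filter.mp hi).2
    -- hence the sum over S is differentiable at x
    have hh : DifferentiableAt ℝ (fun x' : EuclideanSpace ℝ (Fin d) => ∑ i ∈ S, c i * |⟪x', y i⟫|) x := by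
      have := hdiff.fun_sub hg2
      refine this.congr_of_eventuallyEq ?_
      filter_upwards with z
      rw [← Finset.sum_filter_add_sum_filter_not Finset.univ (fun i => ⟪x, y i⟫ = 0)
        (fun i => c i * |⟪z, y i⟫|)]
      ring
    -- translate to the origin
    have hφ : DifferentiableAt ℝ (fun v : EuclideanSpace ℝ (Fin d) => ∑ i ∈ S, c i * |⟪v, y i⟫|) 0 := by
      have htr : DifferentiableAt ℝ (fun v : EuclideanSpace ℝ (Fin d) => x + v) 0 :=
        differentiableAt_id.const_add x
      have hh' : DifferentiableAt ℝ (fun x' : EuclideanSpace ℝ (Fin d) => ∑ i ∈ S, c i * |⟪x', y i⟫|)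
          ((fun v : EuclideanSpace ℝ (Fin d) => x + v) 0) := by simpa using hh
      have := hh'.comp 0 htr
      refine this.congr_of_eventuallyEq ?_
      filter_upwards with v
      refine Finset.sum_congr rfl fun i hi => ?_
      have hxi : ⟪x, y i⟫ = 0 := (Finset.mem_filter.mp hi).2
      rw [inner_add_left, hxi, zero_add]
    -- the homogeneous even part must vanish identically
    have hzero : ∀ v : EuclideanSpace ℝ (Fin d), ∑ i ∈ S, c i * |⟪v, y i⟫| = 0 := by
      intro v
      by_contra hne
      have hlv : DifferentiableAt ℝ (fun t : ℝ => t • v) 0 :=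
        differentiableAt_id.smul_const v
      have hφ' : DifferentiableAt ℝ (fun w : EuclideanSpace ℝ (Fin d) => ∑ i ∈ S, c i * |⟪w, y i⟫|)
          ((fun t : ℝ => t • v) 0) := by simpa using hφ
      have hcomp := hφ'.comp 0 hlv
      have heq : (fun t : ℝ => ∑ i ∈ S, c i * |⟪t • v, y i⟫|)
          = fun t : ℝ => (∑ i ∈ S, c i * |⟪v, y i⟫|) * |t| := by
        funext t
        simp only [real_inner_smul_left, abs_mul, Finset.sum_mul]
        refine Finset.sum_congr rfl fun i _ => ?_
        ring
      simp only [Function.comp_def] at hcomp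
      rw [heq] at hcomp
      exact aux_not_diff_const_mul_abs hne hcomp
    -- find a point on {y j}^⊥ avoiding all other hyperplanes from S
    set W : Submodule ℝ (EuclideanSpace ℝ (Fin d)) := (ℝ ∙ y j)ᗮ with hW
    have hfne : ∀ i ∈ S.erase j,
        ((innerSL ℝ (y i)).toLinearMap.comp W.subtype) ≠ 0 := by
      intro i hi hzero'
      have hij : i ≠ j := (Finset.mem_erase.mp hi).1
      have hyiW : y i ∈ Wᗮ := by
        intro w hw
        have := congrArg (fun g => g ⟨w, hw⟩) hzero'
        simpa [real_inner_comm, mul_comm] using this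
      rw [hW, Submodule.orthogonal_orthogonal] at hyiW
      obtain ⟨t, ht⟩ := Submodule.mem_span_singleton.mp hyiW
      exact hyind i j hij t ht.symm
    obtain ⟨v₀', hv₀'⟩ := aux_exists_forall_ne_zero (S.erase j)
      (fun i => (innerSL ℝ (y i)).toLinearMap.comp W.subtype) hfne
    set v₀ : EuclideanSpace ℝ (Fin d) := (v₀' : EuclideanSpace ℝ (Fin d)) with hv₀def
    have hv₀j : ⟪v₀, y j⟫ = 0 := by
      have h2 : ⟪y j, v₀⟫ = 0 :=
        v₀'.2 (y j) (Submodule.mem_span_singleton_self _)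
      rw [real_inner_comm]
      exact h2
    have hv₀i : ∀ i ∈ S.erase j, ⟪v₀, y i⟫ ≠ 0 := by
      intro i hi
      have := hv₀' i hi
      simpa [real_inner_comm, mul_comm] using this
    -- the rest of the S-sum is differentiable at v₀
    have hrest : DifferentiableAt ℝ
        (fun x' : EuclideanSpace ℝ (Fin d) => ∑ i ∈ S.erase j, c i * |⟪x', y i⟫|) v₀ :=
      DifferentiableAt.fun_sum fun i hi => aux_term_diff _ _ _ (hv₀i i hi)
    -- but then the j-th term would be differentiable at v₀, contradiction
    have hjdiff : DifferentiableAt ℝ (fun x' : EuclideanSpace ℝ (Fin d) => c j * |⟪x', y j⟫|) v₀ := by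
      have hzd : DifferentiableAt ℝ (fun x' : EuclideanSpace ℝ (Fin d) => ∑ i ∈ S, c i * |⟪x', y i⟫|) v₀ := by
        have : (fun x' : EuclideanSpace ℝ (Fin d) => ∑ i ∈ S, c i * |⟪x', y i⟫|) = fun _ : EuclideanSpace ℝ (Fin d) => (0 : ℝ) := by
          funext z; exact hzero z
        rw [this]; exact differentiableAt_const 0
      have := hzd.fun_sub hrest
      refine this.congr_of_eventuallyEq ?_
      filter_upwards with z
      rw [← Finset.add_sum_erase S (fun i => c i * |⟪z, y i⟫|) hjS]
      ring
    exact aux_term_not_diff (hc j) (hy0 j) hv₀j hjdiff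
  · intro h
    exact DifferentiableAt.fun_sum fun i _ => aux_term_diff _ _ _ (h i)
end
end

section
/- Let d ≥ 3 and define f : ℝ^d → ℝ by f(x) = min_{i∈[d]} |x_i| if all coordinates of x are ≥ 0 or all coordinates of x are ≤ 0, and f(x) = 0 otherwise. Then f is not in the Lipschitz closure of the span of the functions x ↦ |⟨x, y⟩| (y ∈ ℝ^d): there exists ε > 0 such that for every N ∈ ℕ, every y₁, …, y_N ∈ ℝ^d, and every c₁, …, c_N ∈ ℝ, one has β(f − Σ_{i=1}^N c_i |⟨·, y_i⟩|) ≥ ε. -/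
noncomputable section

open scoped RealInnerProductSpace

open Classical in
/-- The function `f(x) = minᵢ |xᵢ|` on the nonnegative and nonpositive orthants,
and `f(x) = 0` elsewhere. -/
def orthantMin (d : ℕ) (x : EuclideanSpace ℝ (Fin d)) : ℝ :=
  if (∀ i, 0 ≤ x i) ∨ (∀ i, x i ≤ 0) then ⨅ i, |x i| else 0

open Polynomial

section Aux

lemma sum_two (d : ℕ) (hd : 3 ≤ d) (F : Fin d → ℝ) (h : ∀ k : Fin d, 2 ≤ (k:ℕ) → F k = 0) :
    ∑ k, F k = F ⟨0, by omega⟩ + F ⟨1, by omega⟩ := by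
  rw [← Finset.sum_pair (a := (⟨0, by omega⟩ : Fin d)) (b := ⟨1, by omega⟩) (by simp)]
  apply (Finset.sum_subset (Finset.subset_univ _) _).symm
  intro x _ hx
  apply h
  simp only [Finset.mem_insert, Finset.mem_singleton, Fin.ext_iff] at hx
  omega

def cP (d : ℕ) (k : Fin d) : Polynomial ℝ :=
  if (k : ℕ) < 2 then C 1 + X ^ d else C 2 + X ^ (k : ℕ)

def ptF (d : ℕ) (σ : Fin d → ℝ) (t : ℝ) : EuclideanSpace ℝ (Fin d) :=
  WithLp.toLp 2 (fun k => σ k * (cP d k).eval t)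

def wvec (d : ℕ) : EuclideanSpace ℝ (Fin d) :=
  WithLp.toLp 2 (fun k : Fin d => if (k : ℕ) = 0 then (1:ℝ) else if (k : ℕ) = 1 then -1 else 0)

def sgq (d : ℕ) : Fin d → ℝ := fun k => if (k : ℕ) = 2 then -1 else 1

lemma wvec_high (d : ℕ) (k : Fin d) (hk : 2 ≤ (k:ℕ)) : wvec d k = 0 := by
  show (if (k:ℕ) = 0 then (1:ℝ) else if (k:ℕ) = 1 then -1 else 0) = 0
  rw [if_neg (by omega), if_neg (by omega)]

def polY (d : ℕ) (σ : Fin d → ℝ) (y : EuclideanSpace ℝ (Fin d)) : Polynomial ℝ :=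
  ∑ k, Polynomial.C (σ k * y k) * cP d k

lemma inner_ptF (d : ℕ) (σ : Fin d → ℝ) (t : ℝ) (y : EuclideanSpace ℝ (Fin d)) :
    ⟪ptF d σ t, y⟫ = (polY d σ y).eval t := by
  simp only [PiLp.inner_apply, RCLike.inner_apply, conj_trivial, polY, eval_finset_sum,
    eval_mul, eval_C, ptF]
  exact Finset.sum_congr rfl fun k _ => by ring

lemma inner_wvec (d : ℕ) (hd : 3 ≤ d) (σ : Fin d → ℝ) (t : ℝ)
    (h0 : σ ⟨0, by omega⟩ = 1) (h1 : σ ⟨1, by omega⟩ = 1) :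
    ⟪ptF d σ t, wvec d⟫ = 0 := by
  simp only [PiLp.inner_apply, RCLike.inner_apply, conj_trivial]
  rw [sum_two d hd _ (fun k hk => by rw [wvec_high d k hk, zero_mul])]
  have e0 : wvec d ⟨0, by omega⟩ = 1 := by simp [wvec]
  have e1 : wvec d ⟨1, by omega⟩ = -1 := by simp [wvec]
  rw [e0, e1]
  have c01 : cP d ⟨0, by omega⟩ = cP d ⟨1, by omega⟩ := by simp [cP]
  rw [ptF, PiLp.toLp_apply, PiLp.toLp_apply]
  simp only [h0, h1, c01]
  ring

lemma polY_coeff_high (d : ℕ) (σ : Fin d → ℝ) (y : EuclideanSpace ℝ (Fin d))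
    (k₀ : Fin d) (hk₀ : 2 ≤ (k₀ : ℕ)) :
    (polY d σ y).coeff (k₀ : ℕ) = σ k₀ * y k₀ := by
  have hk0 : ¬ (k₀:ℕ) = 0 := by omega
  rw [polY, finset_sum_coeff]
  rw [Finset.sum_eq_single k₀]
  · rw [coeff_C_mul, cP, if_neg (by omega)]
    simp [coeff_X_pow, coeff_add, coeff_C, hk0]
  · intro j _ hj
    rw [coeff_C_mul, cP]
    split_ifs with h
    · have hlt : (k₀:ℕ) < d := k₀.isLt
      simp [coeff_X_pow, coeff_add, coeff_C, coeff_one, hk0]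
      exact fun he => absurd he (by omega)
    · have hne : (j:ℕ) ≠ (k₀:ℕ) := fun he => hj (Fin.ext he)
      simp [coeff_X_pow, coeff_add, coeff_C, hk0, (Ne.symm hne : ¬ (k₀:ℕ) = (j:ℕ))]
  · simp

lemma polY_coeff_d (d : ℕ) (hd : 3 ≤ d) (σ : Fin d → ℝ) (y : EuclideanSpace ℝ (Fin d)) :
    (polY d σ y).coeff d = σ ⟨0, by omega⟩ * y ⟨0, by omega⟩ + σ ⟨1, by omega⟩ * y ⟨1, by omega⟩ := by
  have hd0 : ¬ (d:ℕ) = 0 := by omega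
  rw [polY, finset_sum_coeff]
  rw [sum_two d hd _ (fun k hk => by
    rw [coeff_C_mul, cP, if_neg (by omega)]
    have hlt : (k:ℕ) < d := k.isLt
    simp [coeff_X_pow, coeff_add, coeff_C, coeff_one, hd0]
    exact fun he => absurd he (by omega))]
  rw [coeff_C_mul, coeff_C_mul, cP, cP, if_pos (by norm_num), if_pos (by norm_num)]
  simp [coeff_X_pow, coeff_add, coeff_C, coeff_one, hd0]

lemma polY_ne_zero (d : ℕ) (hd : 3 ≤ d) (σ : Fin d → ℝ) (y : EuclideanSpace ℝ (Fin d))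
    (h0 : σ ⟨0, by omega⟩ = 1) (h1 : σ ⟨1, by omega⟩ = 1) (hσ : ∀ k, σ k ≠ 0)
    (hy : ¬ ∃ r : ℝ, y = r • wvec d) : polY d σ y ≠ 0 := by
  intro hP
  apply hy
  refine ⟨y ⟨0, by omega⟩, PiLp.ext fun k => ?_⟩
  have hc : ∀ m, (polY d σ y).coeff m = 0 := fun m => by rw [hP]; simp
  have hsum : y ⟨0, by omega⟩ + y ⟨1, by omega⟩ = 0 := by
    have := hc d; rw [polY_coeff_d d hd σ y, h0, h1] at this; linarith
  have hhigh : ∀ k : Fin d, 2 ≤ (k:ℕ) → y k = 0 := by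
    intro k hk
    have := hc (k:ℕ); rw [polY_coeff_high d σ y k hk] at this
    exact (mul_eq_zero.1 this).resolve_left (hσ k)
  show y k = y ⟨0, by omega⟩ * wvec d k
  rcases lt_or_ge (k:ℕ) 2 with h | h
  · rcases (by omega : (k:ℕ) = 0 ∨ (k:ℕ) = 1) with h' | h'
    · have hk : k = ⟨0, by omega⟩ := Fin.ext h'
      rw [hk]; simp [wvec]
    · have hk : k = ⟨1, by omega⟩ := Fin.ext h'
      have hw : wvec d ⟨1, by omega⟩ = -1 := by simp [wvec]
      rw [hk, hw]; linarith
  · rw [hhigh k h, wvec_high d k h, mul_zero]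

lemma abs_sd (a b : ℝ) (h : |b| ≤ |a|) : |a + b| + |a - b| = 2 * |a| := by
  have h1 := neg_abs_le b
  have h2 := le_abs_self b
  rcases le_or_gt 0 a with ha | ha
  · rw [abs_of_nonneg ha] at h
    rw [abs_of_nonneg (by linarith), abs_of_nonneg (by linarith), abs_of_nonneg ha]; ring
  · rw [abs_of_neg ha] at h
    rw [abs_of_nonpos (by linarith), abs_of_nonpos (by linarith), abs_of_neg ha]; ring

lemma f_pt (d : ℕ) (hd : 3 ≤ d) (t : ℝ) (ht0 : 0 < t) (ht1 : t < 1) (s : ℝ) (hs : |s| ≤ 1) :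
    orthantMin d (ptF d (fun _ => 1) t + s • wvec d) = 1 + t ^ d - |s| := by
  have : Nonempty (Fin d) := ⟨⟨0, by omega⟩⟩
  set x := ptF d (fun _ => 1) t + s • wvec d with hxdef
  have htd0 : (0:ℝ) ≤ t ^ d := pow_nonneg ht0.le d
  have htd1 : t ^ d ≤ 1 := pow_le_one₀ ht0.le ht1.le
  have hs1 : -1 ≤ s := neg_le_of_abs_le hs
  have hs2 : s ≤ 1 := le_of_abs_le hs
  have happ : ∀ k, x k = ptF d (fun _ => 1) t k + s * wvec d k := fun k => rfl
  have hx0 : x ⟨0, by omega⟩ = 1 + t ^ d + s := by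
    rw [happ, ptF]; simp [cP, wvec]
  have hx1 : x ⟨1, by omega⟩ = 1 + t ^ d - s := by
    rw [happ, ptF]; simp [cP, wvec]; ring
  have hxk : ∀ k : Fin d, 2 ≤ (k:ℕ) → x k = 2 + t ^ (k:ℕ) := by
    intro k hk
    rw [happ, wvec_high d k hk, mul_zero, add_zero, ptF, PiLp.toLp_apply,
      show cP d k = C 2 + X ^ (k:ℕ) from if_neg (by omega)]
    simp
  have hnn : ∀ k, 0 ≤ x k := by
    intro k
    rcases (by omega : (k:ℕ) = 0 ∨ (k:ℕ) = 1 ∨ 2 ≤ (k:ℕ)) with h | h | h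
    · rw [show k = ⟨0, by omega⟩ from Fin.ext h, hx0]; linarith
    · rw [show k = ⟨1, by omega⟩ from Fin.ext h, hx1]; linarith
    · rw [hxk k h]; positivity
  rw [orthantMin, if_pos (Or.inl hnn)]
  apply le_antisymm
  · rcases le_or_gt 0 s with h | h
    · calc ⨅ k, |x k| ≤ |x ⟨1, by omega⟩| := ciInf_le (Set.Finite.bddBelow (Set.finite_range _)) _
        _ = 1 + t ^ d - |s| := by rw [abs_of_nonneg (hnn _), hx1, abs_of_nonneg h]
    · calc ⨅ k, |x k| ≤ |x ⟨0, by omega⟩| := ciInf_le (Set.Finite.bddBelow (Set.finite_range _)) _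
        _ = 1 + t ^ d - |s| := by rw [abs_of_nonneg (hnn _), hx0, abs_of_neg h]; ring
  · refine le_ciInf fun k => ?_
    rw [abs_of_nonneg (hnn k)]
    have h1 : -|s| ≤ s := neg_abs_le s
    have h2 : s ≤ |s| := le_abs_self s
    have h3 : 0 ≤ |s| := abs_nonneg s
    rcases (by omega : (k:ℕ) = 0 ∨ (k:ℕ) = 1 ∨ 2 ≤ (k:ℕ)) with h | h | h
    · rw [show k = ⟨0, by omega⟩ from Fin.ext h, hx0]; linarith
    · rw [show k = ⟨1, by omega⟩ from Fin.ext h, hx1]; linarith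
    · rw [hxk k h]
      have : (0:ℝ) ≤ t ^ (k:ℕ) := pow_nonneg ht0.le _
      linarith

lemma f_q (d : ℕ) (hd : 3 ≤ d) (t : ℝ) (ht0 : 0 < t) (ht1 : t < 1) (s : ℝ) (hs : |s| ≤ 1) :
    orthantMin d (ptF d (sgq d) t + s • wvec d) = 0 := by
  set x := ptF d (sgq d) t + s • wvec d with hxdef
  have happ : ∀ k, x k = ptF d (sgq d) t k + s * wvec d k := fun k => rfl
  have htd0 : (0:ℝ) < t ^ d := pow_pos ht0 d
  have hs1 : -1 ≤ s := neg_le_of_abs_le hs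
  have hx0 : x ⟨0, by omega⟩ = 1 + t ^ d + s := by
    rw [happ, ptF]; simp [cP, wvec, sgq]
  have hx2 : x ⟨2, by omega⟩ = -(2 + t ^ 2) := by
    rw [happ, wvec_high d _ (by norm_num), mul_zero, add_zero, ptF]
    simp [cP, sgq]
  have ht2 : (0:ℝ) < t ^ 2 := pow_pos ht0 2
  rw [orthantMin, if_neg]
  rintro (h | h)
  · have := h ⟨2, by omega⟩; rw [hx2] at this; linarith
  · have := h ⟨0, by omega⟩; rw [hx0] at this; linarith

end Aux


set_option maxHeartbeats 1000000

/-- For `d ≥ 3`, the function `orthantMin` is not in the Lipschitz closure of the span of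
the max filters `x ↦ |⟨x,y⟩|` for `G = {±I}`: there is an `ε > 0` such that every
Lipschitz constant of `orthantMin d − Σᵢ cᵢ|⟨·, yᵢ⟩|` is at least `ε`, for every finite
linear combination of max filters. -/
theorem stmt_13 (d : ℕ) (hd : 3 ≤ d) :
    ∃ ε : ℝ, 0 < ε ∧
      ∀ (N : ℕ) (y : Fin N → EuclideanSpace ℝ (Fin d)) (c : Fin N → ℝ) (K : ℝ),
        (∀ x z : EuclideanSpace ℝ (Fin d),
          |(orthantMin d x - ∑ i, c i * |⟪x, y i⟫|) -
            (orthantMin d z - ∑ i, c i * |⟪z, y i⟫|)| ≤ K * ‖x - z‖) →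
        ε ≤ K := by
  classical
  refine ⟨1/4, by norm_num, ?_⟩
  intro N y c K hK
  -- the finite set of bad parameters t
  set σp : Fin d → ℝ := fun _ => 1 with hσp
  have hσp0 : σp ⟨0, by omega⟩ = 1 := rfl
  have hσp1 : σp ⟨1, by omega⟩ = 1 := rfl
  have hσq0 : sgq d ⟨0, by omega⟩ = 1 := by simp [sgq]
  have hσq1 : sgq d ⟨1, by omega⟩ = 1 := by simp [sgq]
  have hσqne : ∀ k, sgq d k ≠ 0 := by
    intro k
    show (if (k:ℕ) = 2 then (-1:ℝ) else 1) ≠ 0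
    split_ifs <;> norm_num
  have hσpne : ∀ k : Fin d, σp k ≠ 0 := fun k => one_ne_zero
  set Bad : Set ℝ := ⋃ i ∈ {i : Fin N | ¬ ∃ r : ℝ, y i = r • wvec d},
      ({t | (polY d σp (y i)).IsRoot t} ∪ {t | (polY d (sgq d) (y i)).IsRoot t}) with hBad
  have hBadFin : Bad.Finite := by
    apply Set.Finite.biUnion (Set.toFinite _)
    intro i hi
    exact (finite_setOf_isRoot (polY_ne_zero d hd σp (y i) hσp0 hσp1 hσpne hi)).union
      (finite_setOf_isRoot (polY_ne_zero d hd (sgq d) (y i) hσq0 hσq1 hσqne hi))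
  obtain ⟨t, ht⟩ : ((Set.Ioo (0:ℝ) 1) \ Bad).Nonempty :=
    ((Set.Ioo_infinite (by norm_num)).diff hBadFin).nonempty
  obtain ⟨⟨ht0, ht1⟩, htB⟩ := ht
  set p : EuclideanSpace ℝ (Fin d) := ptF d σp t with hp
  set q : EuclideanSpace ℝ (Fin d) := ptF d (sgq d) t with hq
  set w : EuclideanSpace ℝ (Fin d) := wvec d with hw
  have hroot : ∀ i, (¬ ∃ r : ℝ, y i = r • wvec d) → ⟪p, y i⟫ ≠ 0 ∧ ⟪q, y i⟫ ≠ 0 := by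
    intro i hi
    constructor
    · rw [hp, inner_ptF]
      exact fun h0 => htB (Set.mem_biUnion hi (Or.inl h0))
    · rw [hq, inner_ptF]
      exact fun h0 => htB (Set.mem_biUnion hi (Or.inr h0))
  -- choose the scale s
  set g : Fin N → ℝ := fun i =>
    if ⟪p, y i⟫ = 0 ∨ ⟪q, y i⟫ = 0 ∨ ⟪w, y i⟫ = 0 then 1
    else min |⟪p, y i⟫| |⟪q, y i⟫| / |⟪w, y i⟫| with hg
  have hgpos : ∀ i, 0 < g i := by
    intro i
    simp only [hg]
    split_ifs with h
    · norm_num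
    · push_neg at h
      exact div_pos (lt_min (abs_pos.2 h.1) (abs_pos.2 h.2.1)) (abs_pos.2 h.2.2)
  set T : Finset ℝ := insert 1 (Finset.image g Finset.univ) with hT
  have hTne : T.Nonempty := ⟨1, Finset.mem_insert_self _ _⟩
  set s : ℝ := T.min' hTne with hs
  have hs1 : s ≤ 1 := Finset.min'_le _ _ (Finset.mem_insert_self _ _)
  have hsg : ∀ i, s ≤ g i := fun i =>
    Finset.min'_le _ _ (Finset.mem_insert_of_mem (Finset.mem_image_of_mem g (Finset.mem_univ i)))
  have hspos : 0 < s := by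
    rw [hs]
    apply (Finset.lt_min'_iff _ _).2
    intro x hx
    rcases Finset.mem_insert.1 hx with h | h
    · rw [h]; norm_num
    · obtain ⟨i, _, rfl⟩ := Finset.mem_image.1 h
      exact hgpos i
  have habs : |s| ≤ 1 := by rw [abs_of_pos hspos]; exact hs1
  have habs' : |(-s)| ≤ 1 := by rw [abs_neg]; exact habs
  -- the key per-index identity
  have key : ∀ i : Fin N,
      |⟪p + s • w, y i⟫| + |⟪p - s • w, y i⟫| - 2 * |⟪p, y i⟫| =
      |⟪q + s • w, y i⟫| + |⟪q - s • w, y i⟫| - 2 * |⟪q, y i⟫| := by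
    intro i
    rw [inner_add_left, inner_sub_left, inner_add_left, inner_sub_left,
      real_inner_smul_left]
    set a := ⟪p, y i⟫
    set a' := ⟪q, y i⟫
    set α := ⟪w, y i⟫
    by_cases hα : α = 0
    · rw [hα]; simp only [mul_zero, add_zero, sub_zero]; ring
    by_cases hyi : ∃ r : ℝ, y i = r • wvec d
    · obtain ⟨r, hr⟩ := hyi
      have hpa : a = 0 := by
        show ⟪p, y i⟫ = 0
        rw [hr, real_inner_smul_right, hp, inner_wvec d hd σp t hσp0 hσp1, mul_zero]
      have hqa : a' = 0 := by
        show ⟪q, y i⟫ = 0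
        rw [hr, real_inner_smul_right, hq, inner_wvec d hd (sgq d) t hσq0 hσq1, mul_zero]
      rw [hpa, hqa]
    · obtain ⟨hpa, hqa⟩ := hroot i hyi
      have hgi : g i = min |a| |a'| / |α| := by
        rw [hg]; dsimp only
        rw [if_neg]
        push_neg
        exact ⟨hpa, hqa, hα⟩
      have hb : |s * α| ≤ min |a| |a'| := by
        rw [abs_mul, abs_of_pos hspos]
        calc s * |α| ≤ g i * |α| := by
              apply mul_le_mul_of_nonneg_right (hsg i) (abs_nonneg α)
          _ = min |a| |a'| := by rw [hgi, div_mul_cancel₀ _ (abs_ne_zero.2 hα)]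
      rw [abs_sd a (s * α) (hb.trans (min_le_left _ _)),
        abs_sd a' (s * α) (hb.trans (min_le_right _ _))]
      ring
  -- distribute sums
  have hdist : ∀ x1 x2 x3 : EuclideanSpace ℝ (Fin d),
      ∑ i, c i * (|⟪x1, y i⟫| + |⟪x2, y i⟫| - 2 * |⟪x3, y i⟫|) =
      (∑ i, c i * |⟪x1, y i⟫|) + (∑ i, c i * |⟪x2, y i⟫|) - 2 * (∑ i, c i * |⟪x3, y i⟫|) := by
    intro x1 x2 x3
    rw [Finset.mul_sum, ← Finset.sum_add_distrib, ← Finset.sum_sub_distrib]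
    exact Finset.sum_congr rfl fun i _ => by ring
  have hE : (∑ i, c i * |⟪p + s • w, y i⟫|) + (∑ i, c i * |⟪p - s • w, y i⟫|)
        - 2 * (∑ i, c i * |⟪p, y i⟫|) =
      (∑ i, c i * |⟪q + s • w, y i⟫|) + (∑ i, c i * |⟪q - s • w, y i⟫|)
        - 2 * (∑ i, c i * |⟪q, y i⟫|) := by
    rw [← hdist, ← hdist]
    exact Finset.sum_congr rfl fun i _ => by rw [key i]
  -- orthantMin values
  have hps : p - s • w = p + (-s) • w := by rw [neg_smul, sub_eq_add_neg]
  have hqs : q - s • w = q + (-s) • w := by rw [neg_smul, sub_eq_add_neg]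
  have hp0' : p = p + (0:ℝ) • w := by rw [zero_smul, add_zero]
  have hq0' : q = q + (0:ℝ) • w := by rw [zero_smul, add_zero]
  have hfp1 : orthantMin d (p + s • w) = 1 + t ^ d - s := by
    rw [hp, hw, f_pt d hd t ht0 ht1 s habs, abs_of_pos hspos]
  have hfp2 : orthantMin d (p - s • w) = 1 + t ^ d - s := by
    rw [hps, hp, hw, f_pt d hd t ht0 ht1 (-s) habs', abs_neg, abs_of_pos hspos]
  have hfp0 : orthantMin d p = 1 + t ^ d := by
    rw [hp0', hp, hw, f_pt d hd t ht0 ht1 0 (by norm_num)]; simp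
  have hfq1 : orthantMin d (q + s • w) = 0 := by
    rw [hq, hw, f_q d hd t ht0 ht1 s habs]
  have hfq2 : orthantMin d (q - s • w) = 0 := by
    rw [hqs, hq, hw, f_q d hd t ht0 ht1 (-s) habs']
  have hfq0 : orthantMin d q = 0 := by
    rw [hq0', hq, hw, f_q d hd t ht0 ht1 0 (by norm_num)]
  have hwn : ‖w‖ ≤ 2 ∧ 0 < ‖w‖ := by
    have h2 : ‖w‖ = Real.sqrt (∑ k, ‖w k‖ ^ 2) := by
      rw [hw, EuclideanSpace.norm_eq]
    have h3 : (∑ k, ‖w k‖ ^ 2) = 2 := by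
      rw [sum_two d hd _ (fun k hk => by rw [hw, wvec_high d k hk]; simp)]
      rw [hw]
      have e0 : wvec d ⟨0, by omega⟩ = 1 := by simp [wvec]
      have e1 : wvec d ⟨1, by omega⟩ = -1 := by simp [wvec]
      rw [e0, e1]; norm_num
    rw [h2, h3]
    constructor
    · nlinarith [Real.sq_sqrt (by norm_num : (2:ℝ) ≥ 0), Real.sqrt_nonneg 2]
    · exact Real.sqrt_pos.2 (by norm_num)
  have hb : ∀ x z : EuclideanSpace ℝ (Fin d), x - z = s • w →
      |(orthantMin d x - ∑ i, c i * |⟪x, y i⟫|) -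
        (orthantMin d z - ∑ i, c i * |⟪z, y i⟫|)| ≤ K * (2 * s) := by
    intro x z hxz
    have hthis := hK x z
    have hn : ‖x - z‖ = s * ‖w‖ := by
      rw [hxz, norm_smul, Real.norm_eq_abs, abs_of_pos hspos]
    have hnpos : 0 < ‖x - z‖ := by rw [hn]; exact mul_pos hspos hwn.2
    have hKpos : 0 ≤ K := by
      have h0 : 0 ≤ K * ‖x - z‖ := le_trans (abs_nonneg _) hthis
      exact (mul_nonneg_iff_of_pos_right hnpos).1 h0
    calc |(orthantMin d x - ∑ i, c i * |⟪x, y i⟫|) -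
        (orthantMin d z - ∑ i, c i * |⟪z, y i⟫|)| ≤ K * ‖x - z‖ := hthis
      _ = K * (s * ‖w‖) := by rw [hn]
      _ ≤ K * (2 * s) := by
          apply mul_le_mul_of_nonneg_left _ hKpos
          rw [mul_comm 2 s]
          exact mul_le_mul_of_nonneg_left hwn.1 hspos.le
  have hb1 := hb (p + s • w) p (by abel)
  have hb2 := hb p (p - s • w) (by abel)
  have hb3 := hb (q + s • w) q (by abel)
  have hb4 := hb q (q - s • w) (by abel)
  obtain ⟨hb1a, hb1b⟩ := abs_le.1 hb1
  obtain ⟨hb2a, hb2b⟩ := abs_le.1 hb2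
  obtain ⟨hb3a, hb3b⟩ := abs_le.1 hb3
  obtain ⟨hb4a, hb4b⟩ := abs_le.1 hb4
  have hL : (orthantMin d (p + s • w) - ∑ i, c i * |⟪p + s • w, y i⟫|)
      - (orthantMin d p - ∑ i, c i * |⟪p, y i⟫|)
      + ((orthantMin d (p - s • w) - ∑ i, c i * |⟪p - s • w, y i⟫|)
      - (orthantMin d p - ∑ i, c i * |⟪p, y i⟫|))
      - ((orthantMin d (q + s • w) - ∑ i, c i * |⟪q + s • w, y i⟫|)
      - (orthantMin d q - ∑ i, c i * |⟪q, y i⟫|))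
      - ((orthantMin d (q - s • w) - ∑ i, c i * |⟪q - s • w, y i⟫|)
      - (orthantMin d q - ∑ i, c i * |⟪q, y i⟫|)) = -(2*s) := by
    rw [hfp1, hfp2, hfp0, hfq1, hfq2, hfq0]
    linarith [hE]
  have h8 : 2 * s ≤ K * (2 * s) * 4 := by linarith
  have h2s : (0:ℝ) < 2 * s := by linarith
  have h9 : 2 * s * 1 ≤ 2 * s * (K * 4) := by nlinarith [h8]
  have h10 : (1:ℝ) ≤ K * 4 := le_of_mul_le_mul_left h9 h2s
  linarith
end
end

section
/- For every θ ∈ ℝ, ∫_0^π (1/4 + (3/4)·cos(2φ)) · |cos(θ − φ)| dφ = cos²θ. -/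
noncomputable section

open Real

/-- `∫₀^π (1/4 + (3/4)·cos(2φ)) · |cos(θ − φ)| dφ = cos²θ` for every `θ ∈ ℝ`. -/
theorem stmt_14 (θ : ℝ) :
    ∫ φ in (0:ℝ)..π, (1 / 4 + 3 / 4 * Real.cos (2 * φ)) * |Real.cos (θ - φ)| =
      Real.cos θ ^ 2 := by
  set g : ℝ → ℝ := fun φ => (1 / 4 + 3 / 4 * Real.cos (2 * φ)) * |Real.cos (θ - φ)| with hg
  have hper : Function.Periodic g π := by
    intro x
    simp only [hg]
    have h1 : Real.cos (2 * (x + π)) = Real.cos (2 * x) := by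
      rw [show 2 * (x + π) = 2 * x + 2 * π by ring, Real.cos_add_two_pi]
    have h2 : |Real.cos (θ - (x + π))| = |Real.cos (θ - x)| := by
      rw [show θ - (x + π) = (θ - x) - π by ring, Real.cos_sub_pi, abs_neg]
    rw [h1, h2]
  have shift : ∫ φ in (0:ℝ)..π, g φ = ∫ φ in (θ - π/2)..(θ - π/2 + π), g φ := by
    have := hper.intervalIntegral_add_eq (θ - π/2) 0
    simpa using this.symm
  have comp : ∫ u in (-(π/2))..(π/2), g (u + θ) = ∫ φ in (θ - π/2)..(θ - π/2 + π), g φ := by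
    rw [intervalIntegral.integral_comp_add_right]
    congr 1 <;> ring
  rw [show (∫ φ in (0:ℝ)..π, (1 / 4 + 3 / 4 * Real.cos (2 * φ)) * |Real.cos (θ - φ)|)
      = ∫ φ in (0:ℝ)..π, g φ from rfl, shift, ← comp]
  have habs : ∀ u ∈ Set.uIcc (-(π/2)) (π/2),
      g (u + θ) = (1 / 4 + 3 / 4 * Real.cos (2 * (u + θ))) * Real.cos u := by
    intro u hu
    have hu' : u ∈ Set.Icc (-(π/2)) (π/2) := by
      rwa [Set.uIcc_of_le (by linarith [Real.pi_pos])] at hu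
    have hcos : 0 ≤ Real.cos u := Real.cos_nonneg_of_mem_Icc hu'
    simp only [hg]
    rw [show θ - (u + θ) = -u by ring, Real.cos_neg, abs_of_nonneg hcos]
  rw [intervalIntegral.integral_congr habs]
  have key : ∀ u : ℝ, HasDerivAt
      (fun u => 1/4 * Real.sin u + 1/8 * Real.sin (2*θ + 3*u) + 3/8 * Real.sin (2*θ + u))
      ((1 / 4 + 3 / 4 * Real.cos (2 * (u + θ))) * Real.cos u) u := by
    intro u
    have h1 : HasDerivAt (fun u : ℝ => 1/4 * Real.sin u) (1/4 * Real.cos u) u :=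
      (Real.hasDerivAt_sin u).const_mul (1/4)
    have h2 : HasDerivAt (fun u : ℝ => Real.sin (2*θ + 3*u)) (Real.cos (2*θ + 3*u) * 3) u := by
      have : HasDerivAt (fun u : ℝ => 2*θ + 3*u) 3 u := by
        simpa using ((hasDerivAt_id u).const_mul 3).const_add (2*θ)
      exact (Real.hasDerivAt_sin _).comp u this
    have h3 : HasDerivAt (fun u : ℝ => Real.sin (2*θ + u)) (Real.cos (2*θ + u) * 1) u := by
      have : HasDerivAt (fun u : ℝ => 2*θ + u) 1 u := (hasDerivAt_id u).const_add (2*θ)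
      exact (Real.hasDerivAt_sin _).comp u this
    have := ((h1.add (h2.const_mul (1/8))).add (h3.const_mul (3/8)))
    convert this using 1
    case e'_4 => rfl
    case e'_5 => rfl
    case e'_8 => rfl
    have e1 : Real.cos (2*θ + 3*u) = Real.cos (2*(u+θ)) * Real.cos u
        - Real.sin (2*(u+θ)) * Real.sin u := by
      rw [show 2*θ + 3*u = 2*(u+θ) + u by ring, Real.cos_add]
    have e2 : Real.cos (2*θ + u) = Real.cos (2*(u+θ)) * Real.cos u
        + Real.sin (2*(u+θ)) * Real.sin u := by
      rw [show 2*θ + u = 2*(u+θ) - u by ring, Real.cos_sub]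
    rw [e1, e2]; ring
  rw [intervalIntegral.integral_eq_sub_of_hasDerivAt (fun u _ => key u)
    (by apply Continuous.intervalIntegrable; fun_prop)]
  have A : Real.sin (2*θ + 3*(π/2)) = -Real.cos (2*θ) := by
    rw [show 2*θ + 3*(π/2) = (2*θ + π/2) + π by ring, Real.sin_add_pi,
      Real.sin_add_pi_div_two]
  have B : Real.sin (2*θ + 3*(-(π/2))) = Real.cos (2*θ) := by
    rw [show 2*θ + 3*(-(π/2)) = (2*θ + π/2) - 2*π by ring, Real.sin_sub_two_pi,
      Real.sin_add_pi_div_two]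
  have C : Real.sin (2*θ + π/2) = Real.cos (2*θ) := Real.sin_add_pi_div_two _
  have D : Real.sin (2*θ + -(π/2)) = -Real.cos (2*θ) := by
    rw [show 2*θ + -(π/2) = 2*θ - π/2 by ring, Real.sin_sub_pi_div_two]
  have E : Real.sin (-(π/2)) = -1 := by rw [Real.sin_neg, Real.sin_pi_div_two]
  rw [A, B, C, D, E, Real.sin_pi_div_two, Real.cos_two_mul]
  ring
end
end

section
/- For every θ ∈ ℝ, ∫_0^π (3/4)·sin(2φ) · |cos(θ − φ)| dφ = cos θ · sin θ, and ∫_0^π (1/4 − (3/4)·cos(2φ)) · |cos(θ − φ)| dφ = sin²θ. -/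
noncomputable section

open Real intervalIntegral

lemma key (θ : ℝ) (g : ℝ → ℝ) (hper : ∀ x, g (x + π) = g x) :
    (∫ φ in (0:ℝ)..π, g φ * |Real.cos (θ - φ)|) =
      ∫ u in (-(π/2))..(π/2), g (θ - u) * Real.cos u := by
  have h1 : (∫ φ in (0:ℝ)..π, g φ * |Real.cos (θ - φ)|) =
      ∫ u in (θ - π)..(θ - 0), (fun u => g (θ - u) * |Real.cos u|) u := by
    rw [← intervalIntegral.integral_comp_sub_left (fun u => g (θ - u) * |Real.cos u|) θ]
    apply intervalIntegral.integral_congr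
    intro φ _
    simp
  have hperf : Function.Periodic (fun u => g (θ - u) * |Real.cos u|) π := by
    intro u
    have h : θ - (u + π) + π = θ - u := by ring
    simp only [Real.cos_add_pi, abs_neg]
    rw [← h, hper]
  have h2 : (∫ u in (θ - π)..(θ - 0), (fun u => g (θ - u) * |Real.cos u|) u) =
      ∫ u in (-(π/2))..(π/2), g (θ - u) * |Real.cos u| := by
    have h := hperf.intervalIntegral_add_eq (θ - π) (-(π/2))
    have e1 : θ - π + π = θ - 0 := by ring
    have e2 : -(π/2) + π = π/2 := by ring
    rw [e1, e2] at h
    exact h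
  rw [h1, h2]
  apply intervalIntegral.integral_congr
  intro u hu
  rw [Set.uIcc_of_le (by linarith [pi_pos] : -(π/2) ≤ π/2)] at hu
  simp only
  rw [abs_of_nonneg (Real.cos_nonneg_of_mem_Icc ⟨hu.1, hu.2⟩)]

/-- `∫₀^π (3/4)·sin(2φ)·|cos(θ − φ)| dφ = cosθ·sinθ` and
`∫₀^π (1/4 − (3/4)·cos(2φ))·|cos(θ − φ)| dφ = sin²θ` for every `θ ∈ ℝ`. -/
theorem stmt_15 (θ : ℝ) :
    (∫ φ in (0:ℝ)..π, 3 / 4 * Real.sin (2 * φ) * |Real.cos (θ - φ)|) =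
        Real.cos θ * Real.sin θ ∧
      (∫ φ in (0:ℝ)..π, (1 / 4 - 3 / 4 * Real.cos (2 * φ)) * |Real.cos (θ - φ)|) =
        Real.sin θ ^ 2 := by
  constructor
  · rw [key θ (fun φ => 3 / 4 * Real.sin (2 * φ)) (by
      intro x
      have h : 2 * (x + π) = 2 * x + 2 * π := by ring
      simp [h, Real.sin_add_two_pi])]
    rw [intervalIntegral.integral_eq_sub_of_hasDerivAt
      (f := fun u => 3/8 * Real.cos (2*θ - u) + 1/8 * Real.cos (2*θ - 3*u))
      (f' := fun u => 3 / 4 * Real.sin (2 * (θ - u)) * Real.cos u)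
      (by
        intro u _
        have a1 : HasDerivAt (fun u : ℝ => 2*θ - u) (-1) u := by
          simpa using (hasDerivAt_id u).const_sub (2*θ)
        have a3 : HasDerivAt (fun u : ℝ => 2*θ - 3*u) (-3) u := by
          simpa using ((hasDerivAt_id u).const_mul (3:ℝ)).const_sub (2*θ)
        have d1 : HasDerivAt (fun u : ℝ => Real.cos (2*θ - u)) (Real.sin (2*θ - u)) u := by
          convert a1.cos using 1; ring
        have d2 : HasDerivAt (fun u : ℝ => Real.cos (2*θ - 3*u)) (3 * Real.sin (2*θ - 3*u)) u := by
          convert a3.cos using 1; ring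
        have h := (d1.const_mul (3/8)).add (d2.const_mul (1/8))
        convert h using 1
        · rfl
        simp only [mul_sub, Real.sin_sub, Real.cos_sub, Real.sin_two_mul, Real.cos_two_mul,
          Real.sin_three_mul, Real.cos_three_mul]
        linear_combination (-3/2 * (2*Real.cos θ^2 - 1) * Real.sin u) * Real.sin_sq_add_cos_sq u)
      (by
        apply Continuous.intervalIntegrable
        continuity)]
    have e : (3:ℝ) * (π/2) = π + π/2 := by ring
    simp only [mul_neg, sub_neg_eq_add, e, Real.cos_sub, Real.cos_add, Real.sin_add,
      Real.cos_pi_div_two, Real.sin_pi_div_two, Real.cos_pi, Real.sin_pi, Real.sin_two_mul]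
    ring
  · rw [key θ (fun φ => 1 / 4 - 3 / 4 * Real.cos (2 * φ)) (by
      intro x
      have h : 2 * (x + π) = 2 * x + 2 * π := by ring
      simp [h, Real.cos_add_two_pi])]
    rw [intervalIntegral.integral_eq_sub_of_hasDerivAt
      (f := fun u => 1/4 * Real.sin u + 3/8 * Real.sin (2*θ - u) + 1/8 * Real.sin (2*θ - 3*u))
      (f' := fun u => (1 / 4 - 3 / 4 * Real.cos (2 * (θ - u))) * Real.cos u)
      (by
        intro u _
        have d0 : HasDerivAt Real.sin (Real.cos u) u := Real.hasDerivAt_sin u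
        have a1 : HasDerivAt (fun u : ℝ => 2*θ - u) (-1) u := by
          simpa using (hasDerivAt_id u).const_sub (2*θ)
        have a3 : HasDerivAt (fun u : ℝ => 2*θ - 3*u) (-3) u := by
          simpa using ((hasDerivAt_id u).const_mul (3:ℝ)).const_sub (2*θ)
        have d1 : HasDerivAt (fun u : ℝ => Real.sin (2*θ - u)) (-Real.cos (2*θ - u)) u := by
          convert a1.sin using 1; ring
        have d2 : HasDerivAt (fun u : ℝ => Real.sin (2*θ - 3*u)) (-(3 * Real.cos (2*θ - 3*u))) u := by
          convert a3.sin using 1; ring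
        have h := ((d0.const_mul (1/4)).add (d1.const_mul (3/8))).add (d2.const_mul (1/8))
        convert h using 1
        · rfl
        simp only [mul_sub, Real.sin_sub, Real.cos_sub, Real.sin_two_mul, Real.cos_two_mul,
          Real.sin_three_mul, Real.cos_three_mul]
        linear_combination (-3 * Real.sin θ * Real.cos θ * Real.sin u) * Real.sin_sq_add_cos_sq u)
      (by
        apply Continuous.intervalIntegrable
        continuity)]
    have e : (3:ℝ) * (π/2) = π + π/2 := by ring
    simp only [mul_neg, sub_neg_eq_add, e, Real.sin_sub, Real.sin_add, Real.cos_add,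
      Real.cos_sub, Real.cos_pi_div_two, Real.sin_pi_div_two, Real.cos_pi, Real.sin_pi,
      Real.cos_two_mul, Real.sin_pi_div_two, Real.sin_neg]
    linear_combination -Real.sin_sq_add_cos_sq θ
end
end
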